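/- arXiv:1605.03727 — 2 statements merged into one kernel-verified Lean document; each statement's English description precedes it below -/
import Mathlib

section
/- For a p-form F and a null vector ℓ on an n-dimensional Lorentzian vector space, the condition ℓ_{[a} F_{b₁…b_p]} = 0 together with ℓ^a F_{a b₁…b_{p−1}} = 0 is equivalent to the condition ℓ^a (*F)_{a b₁…b_{n−p−1}} = 0 together with ℓ^a F_{a b₁…b_{p−1}} = 0, where *F denotes the Hodge dual of F with respect to the Lorentzian metric. -/
open scoped BigOperators

noncomputable section

namespace VSI

/-! ### Basic setup: tensor fields on an `n`-dimensional coordinate chart -/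

/-- A point of an `n`-dimensional coordinate chart. -/
abbrev Pt (n : ℕ) := Fin n → ℝ

/-- A covariant tensor field of rank `k`, given by its components. -/
abbrev TensorField (n k : ℕ) := Pt n → (Fin k → Fin n) → ℝ

/-- A vector field, given by its components. -/
abbrev VecField (n : ℕ) := Pt n → Fin n → ℝ

/-- A field of `n × n` matrices (e.g. a metric). -/
abbrev MetricField (n : ℕ) := Pt n → Matrix (Fin n) (Fin n) ℝ

/-- Partial derivative of a scalar function along the `a`-th coordinate. -/
def pd {n : ℕ} (f : Pt n → ℝ) (a : Fin n) (x : Pt n) : ℝ :=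
  fderiv ℝ f x (Pi.single a 1)

/-- Partial derivative masked to the transverse directions (coordinates `≥ 2`). -/
def pdT {n : ℕ} (f : Pt n → ℝ) (a : Fin n) (x : Pt n) : ℝ :=
  if 2 ≤ (a : ℕ) then pd f a x else 0

/-- A function on the chart is independent of the coordinate `r` (coordinate number 1). -/
def IndepOfR {n : ℕ} {α : Type*} (f : Pt n → α) : Prop :=
  ∀ x x' : Pt n, (∀ i : Fin n, (i : ℕ) ≠ 1 → x i = x' i) → f x = f x'

/-- A smooth symmetric metric of Lorentzian signature `(-,+,…,+)`. -/
def IsLorentzMetric {n : ℕ} (g : MetricField n) : Prop :=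
  (∀ a b, ContDiff ℝ (⊤ : ℕ∞) fun x => g x a b) ∧ (∀ x, (g x).IsSymm) ∧
  (∀ x, ∃ P : Matrix (Fin n) (Fin n) ℝ, IsUnit P.det ∧
    P.transpose * g x * P = Matrix.diagonal fun i : Fin n => if (i : ℕ) = 0 then (-1 : ℝ) else 1)

/-- Metric pairing of two vectors at a point. -/
def gdot {n : ℕ} (g : MetricField n) (x : Pt n) (X Y : Fin n → ℝ) : ℝ :=
  ∑ a, ∑ b, g x a b * X a * Y b

/-- Index lowering of a vector field. -/
def lower {n : ℕ} (g : MetricField n) (ℓ : VecField n) (x : Pt n) (a : Fin n) : ℝ :=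
  ∑ b, g x a b * ℓ x b

/-- The 1-form (rank-1 covariant tensor field) associated with a vector field. -/
def lowerField {n : ℕ} (g : MetricField n) (ℓ : VecField n) : TensorField n 1 :=
  fun x idx => lower g ℓ x (idx 0)

/-- Christoffel symbols `Γ^a_{bc}` of the Levi-Civita connection of `g`. -/
def christoffel {n : ℕ} (g : MetricField n) (x : Pt n) (a b c : Fin n) : ℝ :=
  (1/2) * ∑ d, (g x)⁻¹ a d *
    (pd (fun y => g y d c) b x + pd (fun y => g y b d) c x - pd (fun y => g y b c) d x)

/-- Covariant derivative of a covariant tensor field; the new (derivative) index is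
the first index of the result. -/
def covD {n k : ℕ} (g : MetricField n) (T : TensorField n k) : TensorField n (k+1) :=
  fun x idx =>
    pd (fun y => T y fun m => idx m.succ) (idx 0) x
    - ∑ m : Fin k, ∑ e : Fin n,
        christoffel g x e (idx 0) (idx m.succ) * T x (Function.update (fun m' => idx m'.succ) m e)

/-- Iterated covariant derivative. -/
def covDIter {n k : ℕ} (g : MetricField n) (T : TensorField n k) : (I : ℕ) → TensorField n (k + I)
  | 0 => T
  | I + 1 => covD g (covDIter g T I)

/-! ### Scalar polynomial invariants and tensor concomitants -/

/-- A scheme describing a polynomial concomitant of a rank-`k` tensor field: a full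
metric contraction of a tensor product of covariant derivatives (of orders `ord j`)
of the field, with `r` free indices left over.  `m` is the number of contracted
index pairs; `slots` enumerates all index slots of the tensor product. -/
structure ConcomScheme (k r : ℕ) where
  N : ℕ
  hN : 0 < N
  ord : Fin N → ℕ
  m : ℕ
  slots : ((Fin m × Bool) ⊕ Fin r) ≃ (Σ j : Fin N, Fin (k + ord j))

/-- The value of a concomitant scheme: all contracted index pairs are contracted with
the inverse metric. -/
def ConcomScheme.value {k r : ℕ} (S : ConcomScheme k r) {n : ℕ} (g : MetricField n)
    (T : TensorField n k) : TensorField n r := fun x free =>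
  ∑ φ : Fin S.m × Bool → Fin n,
    (∏ i : Fin S.m, (g x)⁻¹ (φ (i, false)) (φ (i, true))) *
    ∏ j : Fin S.N, covDIter g T (S.ord j) x
      (fun s => Sum.elim φ free (S.slots.symm ⟨j, s⟩))

/-- All scalar polynomial invariants constructed from `T` and its covariant
derivatives up to order `I` vanish. -/
def IsVSIUpTo {n k : ℕ} (g : MetricField n) (T : TensorField n k) (I : ℕ) : Prop :=
  ∀ S : ConcomScheme k 0, (∀ j, S.ord j ≤ I) → ∀ x v, S.value g T x v = 0

/-- All scalar polynomial invariants of arbitrary order vanish. -/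
def IsVSI {n k : ℕ} (g : MetricField n) (T : TensorField n k) : Prop :=
  ∀ I : ℕ, IsVSIUpTo g T I

/-- All zeroth order scalar polynomial invariants of `T` vanish at the point `x`. -/
def IsVSI0At {n k : ℕ} (g : MetricField n) (T : TensorField n k) (x : Pt n) : Prop :=
  ∀ S : ConcomScheme k 0, (∀ j, S.ord j = 0) → ∀ v, S.value g T x v = 0

/-- A rank-`r` tensor field `G` is (polynomially) constructed from `T`, its covariant
derivatives of arbitrary order and the metric. -/
def IsConstructedFrom {n k r : ℕ} (g : MetricField n) (T : TensorField n k)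
    (G : TensorField n r) : Prop :=
  G ∈ Submodule.span ℝ {G' : TensorField n r | ∃ S : ConcomScheme k r, G' = S.value g T}

/-- A symmetric-2-tensor "correction" to the standard electromagnetic energy-momentum
tensor: constructed from `T` and its covariant derivatives, where each monomial either
contains at least three factors of the field or at least one covariant derivative
(i.e. it comes from a non-Maxwellian term of a generalized electrodynamics). -/
def IsCorrectionTensor {n k : ℕ} (g : MetricField n) (T : TensorField n k)
    (Tc : TensorField n 2) : Prop :=
  Tc ∈ Submodule.span ℝ {G : TensorField n 2 |
    ∃ S : ConcomScheme k 2, (3 ≤ S.N ∨ ∃ j, 1 ≤ S.ord j) ∧ G = S.value g T}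

/-! ### p-forms, type N, Lie derivative -/

def IsAlternating {n k : ℕ} (T : TensorField n k) : Prop :=
  ∀ (x : Pt n) (idx : Fin k → Fin n) (σ : Equiv.Perm (Fin k)),
    T x (idx ∘ σ) = ((Equiv.Perm.sign σ : ℤ) : ℝ) * T x idx

def IsSmoothT {n k : ℕ} (T : TensorField n k) : Prop :=
  ∀ idx, ContDiff ℝ (⊤ : ℕ∞) fun x => T x idx

/-- A smooth differential form (totally antisymmetric covariant tensor field). -/
def IsFormField {n k : ℕ} (T : TensorField n k) : Prop :=
  IsSmoothT T ∧ IsAlternating T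

def IsSmoothVec {n : ℕ} (ℓ : VecField n) : Prop :=
  ∀ a, ContDiff ℝ (⊤ : ℕ∞) fun x => ℓ x a

/-- A (nowhere vanishing, smooth) null vector field. -/
def IsNullField {n : ℕ} (g : MetricField n) (ℓ : VecField n) : Prop :=
  IsSmoothVec ℓ ∧ (∀ x, ℓ x ≠ 0) ∧ ∀ x, gdot g x (ℓ x) (ℓ x) = 0

/-- `ℓ^a F_{a b₁ … b_{p-1}} = 0`. -/
def ContractsFirstZero {n p : ℕ} [NeZero p] (ℓ : VecField n) (F : TensorField n p) : Prop :=
  ∀ (x : Pt n) (v : Fin p → Fin n), (∑ a, ℓ x a * F x (Function.update v 0 a)) = 0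

/-- `ℓ_{[a} F_{b₁ … b_p]} = 0`. -/
def WedgeWithZero {n p : ℕ} (g : MetricField n) (ℓ : VecField n) (F : TensorField n p) : Prop :=
  ∀ (x : Pt n) (idx : Fin (p+1) → Fin n),
    (∑ σ : Equiv.Perm (Fin (p+1)), ((Equiv.Perm.sign σ : ℤ) : ℝ) *
      (lower g ℓ x (idx (σ 0)) * F x (fun m => idx (σ m.succ)))) = 0

/-- The `p`-form `F` is of type N with multiple null direction `ℓ`. -/
def IsTypeN {n p : ℕ} [NeZero p] (g : MetricField n) (F : TensorField n p)
    (ℓ : VecField n) : Prop :=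
  IsNullField g ℓ ∧ ContractsFirstZero ℓ F ∧ WedgeWithZero g ℓ F

/-- Lie derivative of a covariant tensor field along a vector field. -/
def lieD {n k : ℕ} (ℓ : VecField n) (T : TensorField n k) : TensorField n k :=
  fun x idx =>
    (∑ a, ℓ x a * pd (fun y => T y idx) a x)
    + ∑ m : Fin k, ∑ a, pd (fun y => ℓ y a) (idx m) x * T x (Function.update idx m a)

/-! ### Optical properties: geodesic, Kundt -/

/-- `∇_b ℓ_a` (first index is the derivative index). -/
def nablaLow {n : ℕ} (g : MetricField n) (ℓ : VecField n) (x : Pt n) (b a : Fin n) : ℝ :=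
  covD g (lowerField g ℓ) x ![b, a]

/-- `ℓ` is geodesic: `ℓ^b ∇_b ℓ_a ∝ ℓ_a`. -/
def IsGeodesicField {n : ℕ} (g : MetricField n) (ℓ : VecField n) : Prop :=
  ∀ x, ∃ c : ℝ, ∀ a, (∑ b, ℓ x b * nablaLow g ℓ x b a) = c * lower g ℓ x a

/-- `ℓ` is affinely parameterized: `ℓ^b ∇_b ℓ_a = 0`. -/
def IsAffinelyParam {n : ℕ} (g : MetricField n) (ℓ : VecField n) : Prop :=
  ∀ x a, (∑ b, ℓ x b * nablaLow g ℓ x b a) = 0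

/-- `ℓ` is a Kundt null vector field: null, geodesic and with vanishing optical matrix
(expansion-free, shear-free and twist-free). -/
def IsKundt {n : ℕ} (g : MetricField n) (ℓ : VecField n) : Prop :=
  IsNullField g ℓ ∧ IsGeodesicField g ℓ ∧
  ∀ (x : Pt n) (X Y : Fin n → ℝ), gdot g x X (ℓ x) = 0 → gdot g x Y (ℓ x) = 0 →
    (∑ a, ∑ b, X a * Y b * nablaLow g ℓ x b a) = 0

/-! ### Curvature -/

/-- Fully lowered Riemann tensor `R_{abcd}`. -/
def riemann {n : ℕ} (g : MetricField n) : TensorField n 4 := fun x idx =>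
  ∑ e, g x (idx 0) e *
    (pd (fun y => christoffel g y e (idx 3) (idx 1)) (idx 2) x
     - pd (fun y => christoffel g y e (idx 2) (idx 1)) (idx 3) x
     + ∑ f', (christoffel g x e (idx 2) f' * christoffel g x f' (idx 3) (idx 1)
            - christoffel g x e (idx 3) f' * christoffel g x f' (idx 2) (idx 1)))

def ricci {n : ℕ} (g : MetricField n) (x : Pt n) (b d : Fin n) : ℝ :=
  ∑ a, ∑ c, (g x)⁻¹ a c * riemann g x ![a, b, c, d]

def ricciScalar {n : ℕ} (g : MetricField n) (x : Pt n) : ℝ :=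
  ∑ b, ∑ d, (g x)⁻¹ b d * ricci g x b d

def tracelessRicci {n : ℕ} (g : MetricField n) : TensorField n 2 := fun x idx =>
  ricci g x (idx 0) (idx 1) - ricciScalar g x / (n : ℝ) * g x (idx 0) (idx 1)

/-- Weyl tensor `C_{abcd}` (for `n ≥ 3`). -/
def weyl {n : ℕ} (g : MetricField n) : TensorField n 4 := fun x idx =>
  riemann g x idx
  - (1 / ((n : ℝ) - 2)) *
      (g x (idx 0) (idx 2) * ricci g x (idx 3) (idx 1)
       - g x (idx 0) (idx 3) * ricci g x (idx 2) (idx 1)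
       - g x (idx 1) (idx 2) * ricci g x (idx 3) (idx 0)
       + g x (idx 1) (idx 3) * ricci g x (idx 2) (idx 0))
  + (1 / (((n : ℝ) - 1) * ((n : ℝ) - 2))) * ricciScalar g x *
      (g x (idx 0) (idx 2) * g x (idx 3) (idx 1) - g x (idx 0) (idx 3) * g x (idx 2) (idx 1))

/-! ### Null frames, boost weights, algebraic types -/

/-- A null frame at a point: two null vectors `e 0 = ℓ`, `e 1 = n` with `ℓ·n = 1`, and
orthonormal spacelike vectors `e i`, `i ≥ 2`, orthogonal to both. -/
structure NullFrameAt {n : ℕ} [NeZero n] (g : MetricField n) (x : Pt n) where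
  e : Fin n → Fin n → ℝ
  h00 : gdot g x (e 0) (e 0) = 0
  h11 : gdot g x (e 1) (e 1) = 0
  h01 : gdot g x (e 0) (e 1) = 1
  h0i : ∀ i : Fin n, 2 ≤ (i : ℕ) → gdot g x (e 0) (e i) = 0
  h1i : ∀ i : Fin n, 2 ≤ (i : ℕ) → gdot g x (e 1) (e i) = 0
  hij : ∀ i j : Fin n, 2 ≤ (i : ℕ) → 2 ≤ (j : ℕ) →
    gdot g x (e i) (e j) = (if i = j then 1 else 0)

/-- Boost weight of a frame multi-index: `+1` for each contraction with `ℓ = e 0`,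
`-1` for each contraction with `n = e 1`. -/
def bw {n k : ℕ} (a : Fin k → Fin n) : ℤ :=
  ((Finset.univ.filter fun m => (a m : ℕ) = 0).card : ℤ)
  - ((Finset.univ.filter fun m => (a m : ℕ) = 1).card : ℤ)

/-- Frame components of a covariant tensor. -/
def frameComp {n k : ℕ} (T : TensorField n k) (e : Fin n → Fin n → ℝ) (x : Pt n)
    (a : Fin k → Fin n) : ℝ :=
  ∑ idx : Fin k → Fin n, T x idx * ∏ m, e (a m) (idx m)

/-- The tensor field `T` has boost order at most `b` with respect to the null
direction `ℓ`: in any null frame containing `ℓ`, all frame components of boost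
weight `> b` vanish.  `b = 0` is the aligned type II condition, `b = -1` type III. -/
def BoostOrderLE {n k : ℕ} [NeZero n] (g : MetricField n) (ℓ : VecField n)
    (T : TensorField n k) (b : ℤ) : Prop :=
  ∀ (x : Pt n) (fr : NullFrameAt g x), fr.e 0 = ℓ x →
    ∀ a : Fin k → Fin n, b < bw a → frameComp T fr.e x a = 0

/-- `g` is a degenerate Kundt metric with Kundt null direction `ℓ`: `ℓ` is Kundt and
the Riemann tensor together with its covariant derivatives of all orders is of aligned
type II with respect to `ℓ`. -/
def IsDegenerateKundt {n : ℕ} [NeZero n] (g : MetricField n) (ℓ : VecField n) : Prop :=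
  IsKundt g ℓ ∧ ∀ I : ℕ, BoostOrderLE g ℓ (covDIter g (riemann g) I) 0

/-! ### Exterior derivative, Hodge dual, Maxwell equations -/

/-- Exterior derivative (components, no normalization factor). -/
def extD {n k : ℕ} (F : TensorField n k) : TensorField n (k+1) := fun x idx =>
  ∑ m : Fin (k+1), (-1 : ℝ) ^ (m : ℕ) *
    pd (fun y => F y fun i => idx (m.succAbove i)) (idx m) x

/-- Sign of a self-map of `Fin k` (0 if not bijective). -/
def permSign {k : ℕ} (f : Fin k → Fin k) : ℤ :=
  if h : Function.Bijective f then Equiv.Perm.sign (Equiv.ofBijective f h) else 0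

/-- Raise all indices of a covariant tensor with the inverse metric. -/
def raiseAll {n k : ℕ} (g : MetricField n) (T : TensorField n k) : TensorField n k :=
  fun x idx => ∑ jdx : Fin k → Fin n, (∏ m, (g x)⁻¹ (idx m) (jdx m)) * T x jdx

/-- Hodge dual of a `p`-form (`p + q = n`), via the metric volume element
`√|det g| ε_{a₁…aₙ}`. -/
def hodge {n p q : ℕ} (h : p + q = n) (g : MetricField n) (F : TensorField n p) :
    TensorField n q := fun x idx =>
  (1 / (Nat.factorial p : ℝ)) *
    ∑ a : Fin p → Fin n, raiseAll g F x a *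
      (Real.sqrt |(g x).det| *
        ((permSign fun i => Fin.append a idx (Fin.cast h.symm i) : ℤ) : ℝ))

/-- Source-free Maxwell equations `dF = 0 = d*F` for a `p`-form (`p + q = n`). -/
def MaxwellEqs {n p q : ℕ} (h : p + q = n) (g : MetricField n) (F : TensorField n p) : Prop :=
  (∀ x idx, extD F x idx = 0) ∧ (∀ x idx, extD (hodge h g F) x idx = 0)

/-! ### Wedge products -/

def wedgeP {n a b : ℕ} (F : TensorField n a) (G : TensorField n b) : TensorField n (a+b) :=
  fun x idx => ∑ σ : Equiv.Perm (Fin (a+b)), ((Equiv.Perm.sign σ : ℤ) : ℝ) *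
    (F x fun i => idx (σ (Fin.castAdd b i))) * (G x fun j => idx (σ (Fin.natAdd a j)))

def wedgePow {n p : ℕ} (F : TensorField n p) : (k : ℕ) → TensorField n (p * k)
  | 0 => fun _ _ => 1
  | k + 1 => wedgeP (wedgePow F k) F

def castT {n a b : ℕ} (h : a = b) (T : TensorField n a) : TensorField n b :=
  fun x idx => T x fun i => idx (Fin.cast h i)

/-! ### Degenerate Kundt metrics in adapted coordinates -/

/-- The Kundt metric `ds² = 2 du (dr + H du + W_α dx^α) + g_{αβ} dx^α dx^β` in
coordinates `(u, r, x^α) = (x⁰, x¹, x^{α≥2})`. -/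
def kundtMetric {n : ℕ} (H : Pt n → ℝ) (W : Pt n → Fin n → ℝ) (hT : MetricField n) :
    MetricField n := fun x => Matrix.of fun a b =>
  if (a : ℕ) = 0 ∧ (b : ℕ) = 0 then 2 * H x
  else if ((a : ℕ) = 0 ∧ (b : ℕ) = 1) ∨ ((a : ℕ) = 1 ∧ (b : ℕ) = 0) then 1
  else if (a : ℕ) = 0 then W x b
  else if (b : ℕ) = 0 then W x a
  else if (a : ℕ) = 1 ∨ (b : ℕ) = 1 then 0
  else hT x a b

/-- A transverse (Riemannian) metric `g_{αβ}(u,x)`, stored as an `n×n` matrix padded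
by the identity on the coordinates `u, r`. -/
def IsTransverseMetric {n : ℕ} (hT : MetricField n) : Prop :=
  (∀ (x : Pt n) (a b : Fin n), ((a : ℕ) < 2 ∨ (b : ℕ) < 2) → hT x a b = (if a = b then 1 else 0)) ∧
  (∀ x, (hT x).IsSymm) ∧ (∀ a b, ContDiff ℝ (⊤ : ℕ∞) fun x => hT x a b) ∧
  IndepOfR hT ∧ (∀ x, (hT x).PosDef)

/-- Data of a degenerate Kundt metric: `W_α = r W¹_α + W⁰_α`,
`H = r² H² + r H¹ + H⁰`, transverse metric `hT`. -/
structure DegKundtData (n : ℕ) where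
  H2 : Pt n → ℝ
  H1 : Pt n → ℝ
  H0 : Pt n → ℝ
  W1 : Pt n → Fin n → ℝ
  W0 : Pt n → Fin n → ℝ
  hT : MetricField n

def DegKundtData.Hfun {n : ℕ} [NeZero n] (D : DegKundtData n) : Pt n → ℝ :=
  fun z => (z 1)^2 * D.H2 z + z 1 * D.H1 z + D.H0 z

def DegKundtData.Wfun {n : ℕ} [NeZero n] (D : DegKundtData n) : Pt n → Fin n → ℝ :=
  fun z b => z 1 * D.W1 z b + D.W0 z b

/-- The degenerate Kundt metric built from the data. -/
def DegKundtData.metric {n : ℕ} [NeZero n] (D : DegKundtData n) : MetricField n :=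
  kundtMetric D.Hfun D.Wfun D.hT

/-- Regularity and shape conditions on the degenerate Kundt data: the metric functions
depend only on `(u, x^α)` and are smooth, `W`'s are transverse. -/
def DegKundtData.Regular {n : ℕ} (D : DegKundtData n) : Prop :=
  IsTransverseMetric D.hT ∧
  IndepOfR D.H2 ∧ IndepOfR D.H1 ∧ IndepOfR D.H0 ∧ IndepOfR D.W1 ∧ IndepOfR D.W0 ∧
  ContDiff ℝ (⊤ : ℕ∞) D.H2 ∧ ContDiff ℝ (⊤ : ℕ∞) D.H1 ∧ ContDiff ℝ (⊤ : ℕ∞) D.H0 ∧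
  (∀ a, ContDiff ℝ (⊤ : ℕ∞) fun x => D.W1 x a) ∧ (∀ a, ContDiff ℝ (⊤ : ℕ∞) fun x => D.W0 x a) ∧
  (∀ (x : Pt n) (a : Fin n), (a : ℕ) < 2 → D.W1 x a = 0) ∧ (∀ (x : Pt n) (a : Fin n), (a : ℕ) < 2 → D.W0 x a = 0)

/-- The `(q+1)`-form `du ∧ f` built from a transverse `q`-form `f`. -/
def duWedge {n q : ℕ} (f : TensorField n q) : TensorField n (q+1) := fun x idx =>
  ∑ m : Fin (q+1), (-1 : ℝ) ^ (m : ℕ) * (if (idx m : ℕ) = 0 then 1 else 0) *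
    f x (fun i => idx (m.succAbove i))

/-- `f_{[α₂…α_p , α₁]} = 0`: `f` is closed in the transverse geometry. -/
def TransClosed {n q : ℕ} (f : TensorField n q) : Prop :=
  ∀ (x : Pt n) (v : Fin (q+1) → Fin n), (∀ i, 2 ≤ (v i : ℕ)) →
    (∑ m : Fin (q+1), (-1 : ℝ) ^ (m : ℕ) *
      pd (fun y => f y fun i => v (m.succAbove i)) (v m) x) = 0

/-- `(√g̃ f^{β α₁…α_{p-2}})_{,β} = 0`: `f` is co-closed in the transverse geometry. -/
def TransCoclosed {n q : ℕ} [NeZero q] (hT : MetricField n) (f : TensorField n q) : Prop :=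
  ∀ (x : Pt n) (v : Fin q → Fin n),
    (∑ b : Fin n, pd (fun y =>
      Real.sqrt (hT y).det * raiseAll hT f y (Function.update v 0 b)) b x) = 0

/-! ### Transverse curvature -/

def christoffelT {n : ℕ} (h : MetricField n) (x : Pt n) (a b c : Fin n) : ℝ :=
  (1/2) * ∑ d, (h x)⁻¹ a d *
    (pdT (fun y => h y d c) b x + pdT (fun y => h y b d) c x - pdT (fun y => h y b c) d x)

def covDT {n k : ℕ} (h : MetricField n) (T : TensorField n k) : TensorField n (k+1) :=
  fun x idx =>
    pdT (fun y => T y fun m => idx m.succ) (idx 0) x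
    - ∑ m : Fin k, ∑ e : Fin n,
        christoffelT h x e (idx 0) (idx m.succ) * T x (Function.update (fun m' => idx m'.succ) m e)

def riemannT {n : ℕ} (h : MetricField n) : TensorField n 4 := fun x idx =>
  ∑ e, h x (idx 0) e *
    (pdT (fun y => christoffelT h y e (idx 3) (idx 1)) (idx 2) x
     - pdT (fun y => christoffelT h y e (idx 2) (idx 1)) (idx 3) x
     + ∑ f', (christoffelT h x e (idx 2) f' * christoffelT h x f' (idx 3) (idx 1)
            - christoffelT h x e (idx 3) f' * christoffelT h x f' (idx 2) (idx 1)))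

def ricciT {n : ℕ} (h : MetricField n) (x : Pt n) (b d : Fin n) : ℝ :=
  ∑ a, ∑ c, (h x)⁻¹ a c * riemannT h x ![a, b, c, d]

def ricciScalarT {n : ℕ} (h : MetricField n) (x : Pt n) : ℝ :=
  ∑ b, ∑ d, (h x)⁻¹ b d * ricciT h x b d

/-- A covector field as a rank-1 tensor field. -/
def oneForm {n : ℕ} (W : Pt n → Fin n → ℝ) : TensorField n 1 := fun x idx => W x (idx 0)

/-- Transverse covariant derivative `∇̃_b V_a` (`= V_{a||b}`). -/
def nablaT {n : ℕ} (h : MetricField n) (V : TensorField n 1) (x : Pt n) (b a : Fin n) : ℝ :=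
  covDT h V x ![b, a]

/-- Second transverse covariant derivative `∇̃_c ∇̃_b V_a`. -/
def nablaT2 {n : ℕ} (h : MetricField n) (V : TensorField n 1) (x : Pt n) (c b a : Fin n) : ℝ :=
  covDT h (covDT h V) x ![c, b, a]

/-- Transverse divergence `V^{α}{}_{||α}`. -/
def divT {n : ℕ} (h : MetricField n) (V : TensorField n 1) (x : Pt n) : ℝ :=
  ∑ b, ∑ c, (h x)⁻¹ b c * nablaT h V x b c

def gradT {n : ℕ} (f : Pt n → ℝ) : TensorField n 1 := fun x idx => pdT f (idx 0) x

/-- Transverse Laplacian. -/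
def laplaceT {n : ℕ} (h : MetricField n) (f : Pt n → ℝ) (x : Pt n) : ℝ :=
  ∑ a, ∑ b, (h x)⁻¹ a b * covDT h (gradT f) x ![a, b]

def lnSqrtDet {n : ℕ} (h : MetricField n) (y : Pt n) : ℝ :=
  Real.log (Real.sqrt (h y).det)

/-! ### Electromagnetic energy-momentum tensor -/

/-- Standard energy-momentum tensor of a `(q+1)`-form Maxwell field:
`T_{ab} = (1/q!) (F_{a c⃗} F_b{}^{c⃗} - (1/(2(q+1))) g_{ab} F_{c⃗}F^{c⃗})`. -/
def emTensor {n q : ℕ} (g : MetricField n) (F : TensorField n (q+1)) (x : Pt n)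
    (a b : Fin n) : ℝ :=
  (1 / (Nat.factorial q : ℝ)) *
    ((∑ v : Fin q → Fin n, F x (Fin.cons a v) *
        ∑ w : Fin q → Fin n, (∏ i, (g x)⁻¹ (v i) (w i)) * F x (Fin.cons b w))
     - (1 / (2 * ((q : ℝ) + 1))) * g x a b *
        ∑ v : Fin (q+1) → Fin n, F x v * raiseAll g F x v)

/-! ### Coordinate transformations (for adapted coordinates) -/

/-- Jacobian `∂ψ^a/∂y^b` of a coordinate change. -/
def jac {n : ℕ} (ψ : Pt n → Pt n) (y : Pt n) (a b : Fin n) : ℝ :=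
  pd (fun z => ψ z a) b y

/-- Pullback of the metric along the coordinate change `ψ` (from new to old coords). -/
def pullMetric {n : ℕ} (g : MetricField n) (ψ : Pt n → Pt n) : MetricField n :=
  fun y => Matrix.of fun μ ν => ∑ a, ∑ b, jac ψ y a μ * jac ψ y b ν * g (ψ y) a b

/-- Pullback of a covariant tensor field along `ψ`. -/
def pullForm {n p : ℕ} (F : TensorField n p) (ψ : Pt n → Pt n) : TensorField n p :=
  fun y idx => ∑ jdx : Fin p → Fin n, (∏ m, jac ψ y (jdx m) (idx m)) * F (ψ y) jdx

/-! ### Parallelly transported adapted frames -/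

/-- A null frame field containing `ℓ`, parallelly transported along `ℓ` and adapted
(`M^i_{jk} = 0`). -/
structure AdaptedPTFrame {n : ℕ} [NeZero n] (g : MetricField n) (ℓ : VecField n) where
  fr : ∀ x : Pt n, NullFrameAt g x
  aligned : ∀ x, (fr x).e 0 = ℓ x
  parallel : ∀ (x : Pt n) (a c : Fin n),
    (∑ b, ℓ x b * (pd (fun y => (fr y).e a c) b x
      + ∑ d, christoffel g x c b d * (fr x).e a d)) = 0
  adapted : ∀ (x : Pt n) (i j k : Fin n), 2 ≤ (i : ℕ) → 2 ≤ (j : ℕ) → 2 ≤ (k : ℕ) →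
    (∑ a, ∑ b, covD g (lowerField g fun z => (fr z).e j) x ![b, a]
      * (fr x).e i a * (fr x).e k b) = 0

/-! ### Explicit Petrov type III solutions -/

/-- The type III vacuum metric of Petrov,
`ds² = 2 du (dr + ½(xr − x eˣ) du) + eˣ(dx² + e^{2u} dy²)`, in coordinates
`(u,r,x,y)`. -/
def petrovG : MetricField 4 := fun z => Matrix.of fun a b =>
  if a = 0 ∧ b = 0 then z 2 * z 1 - z 2 * Real.exp (z 2)
  else if (a = 0 ∧ b = 1) ∨ (a = 1 ∧ b = 0) then 1
  else if a = 2 ∧ b = 2 then Real.exp (z 2)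
  else if a = 3 ∧ b = 3 then Real.exp (z 2 + 2 * z 0)
  else 0

/-- The same metric with the electromagnetic backreaction term
`−2κ₀ eˣ c(u)²` included in `2H`. -/
def petrovEM (κ₀ : ℝ) (c : ℝ → ℝ) : MetricField 4 := fun z => Matrix.of fun a b =>
  if a = 0 ∧ b = 0 then z 2 * z 1 - z 2 * Real.exp (z 2) - 2 * κ₀ * Real.exp (z 2) * (c (z 0))^2
  else if (a = 0 ∧ b = 1) ∨ (a = 1 ∧ b = 0) then 1
  else if a = 2 ∧ b = 2 then Real.exp (z 2)
  else if a = 3 ∧ b = 3 then Real.exp (z 2 + 2 * z 0)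
  else 0

/-- The null direction `ℓ = ∂_r`. -/
def ellR : VecField 4 := fun _ a => if a = 1 then 1 else 0

/-- The transverse covector of the VSI Maxwell field (4). -/
def petrovA (c : ℝ → ℝ) (z : Pt 4) : Fin 4 → ℝ := fun a =>
  if a = 2 then -(Real.exp (z 2 / 2) * c (z 0) * Real.cos (z 3 * Real.exp (z 0) / 2))
  else if a = 3 then Real.exp (z 2 / 2) * c (z 0) * Real.exp (z 0) * Real.sin (z 3 * Real.exp (z 0) / 2)
  else 0

/-- The Maxwell 2-form
`F = e^{x/2} c(u) du ∧ (−cos(y eᵘ/2) dx + eᵘ sin(y eᵘ/2) dy)`. -/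
def petrovF (c : ℝ → ℝ) : TensorField 4 2 := fun z idx =>
  (if idx 0 = 0 then petrovA c z (idx 1) else 0)
  - (if idx 1 = 0 then petrovA c z (idx 0) else 0)


/-- Pointwise Hodge dual of a `p`-form on an `n`-dimensional Lorentzian vector space. -/
def hodgeAt {n p q : ℕ} (h : p + q = n) (g : Matrix (Fin n) (Fin n) ℝ)
    (F : (Fin p → Fin n) → ℝ) : (Fin q → Fin n) → ℝ := fun idx =>
  (1 / (Nat.factorial p : ℝ)) *
    ∑ a : Fin p → Fin n,
      (∑ c : Fin p → Fin n, (∏ m, g⁻¹ (a m) (c m)) * F c) *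
      (Real.sqrt |g.det| *
        ((permSign fun i => Fin.append a idx (Fin.cast h.symm i) : ℤ) : ℝ))

theorem permSign_comp {k : ℕ} (f : Fin k → Fin k) (σ : Equiv.Perm (Fin k)) :
    permSign (f ∘ σ) = permSign f * (Equiv.Perm.sign σ : ℤ) := by
  by_cases hb : Function.Bijective f
  · have hb2 : Function.Bijective (f ∘ σ) := hb.comp σ.bijective
    rw [permSign, permSign, dif_pos hb, dif_pos hb2]
    have he : Equiv.ofBijective (f ∘ ⇑σ) hb2 = (Equiv.ofBijective f hb) * σ := by
      ext x; rfl
    rw [he, Equiv.Perm.sign_mul]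
    push_cast; ring
  · have hb2 : ¬ Function.Bijective (f ∘ ⇑σ) := by
      intro hc
      have hfe : f = (f ∘ ⇑σ) ∘ ⇑σ.symm := by ext x; simp
      exact hb (hfe ▸ hc.comp σ.symm.bijective)
    rw [permSign, permSign, dif_neg hb, dif_neg hb2, zero_mul]

theorem permSign_ne_zero {k : ℕ} {f : Fin k → Fin k} (hb : Function.Bijective f) :
    permSign f ≠ 0 := by
  rw [permSign, dif_pos hb]; exact Units.ne_zero _

theorem bijective_of_permSign_ne_zero {k : ℕ} {f : Fin k → Fin k} (h : permSign f ≠ 0) :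
    Function.Bijective f := by
  by_contra hb; rw [permSign, dif_neg hb] at h; exact h rfl

theorem sign_mul_self_real {k : ℕ} (σ : Equiv.Perm (Fin k)) :
    ((Equiv.Perm.sign σ : ℤ) : ℝ) * ((Equiv.Perm.sign σ : ℤ) : ℝ) = 1 := by
  have h2 : ((Equiv.Perm.sign σ : ℤ) * (Equiv.Perm.sign σ : ℤ)) = ((1 : ℤˣ) : ℤ) := by
    rw [← Units.val_mul, Int.units_mul_self]
  have h3 : ((Equiv.Perm.sign σ : ℤ) * (Equiv.Perm.sign σ : ℤ)) = (1 : ℤ) := by simpa using h2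
  exact_mod_cast h3

section DualAux

variable {n p q : ℕ} [NeZero p] [NeZero q] (h : p + q = n)

/-- The combined index tuple appearing inside `hodgeAt`, as a self-map of `Fin n`. -/
def Kp (a'' : Fin (p+1) → Fin n) (v : Fin q → Fin n) : Fin n → Fin n :=
  fun i => Fin.append (Fin.tail a'') (Function.update v 0 (a'' 0)) (Fin.cast h.symm i)

theorem qpos : 0 < q := Nat.pos_of_ne_zero (NeZero.ne q)

/-- Embedding of the `p+1` "form slots" into the `n` slots of the combined tuple. -/
def iotaF (j : Fin (p+1)) : Fin n :=
  if (j : ℕ) = 0 then ⟨p, by have := qpos (q := q); omega⟩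
  else ⟨(j : ℕ) - 1, by have := qpos (q := q); have := j.isLt; omega⟩

theorem iotaF_injective : Function.Injective (iotaF (p := p) (q := q) h) := by
  intro i j hij
  apply Fin.ext
  have hi2 := i.isLt; have hj2 := j.isLt
  unfold iotaF at hij
  have hv := congrArg Fin.val hij
  by_cases hi : (i : ℕ) = 0 <;> by_cases hj : (j : ℕ) = 0 <;>
    simp only [hi, hj, if_pos, if_neg, if_true, if_false] at hv <;> omega

/-- The slot embedding as a `Function.Embedding`. -/
def iotaE : Fin (p+1) ↪ Fin n := ⟨iotaF h, iotaF_injective h⟩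

theorem Kp_lt (a'' : Fin (p+1) → Fin n) (v : Fin q → Fin n) (i : Fin n) (hi : (i : ℕ) < p) :
    Kp h a'' v i = a'' ⟨(i : ℕ) + 1, by omega⟩ := by
  have hc : Fin.cast h.symm i = Fin.castAdd q ⟨(i : ℕ), hi⟩ := by
    apply Fin.ext; simp
  rw [Kp, hc, Fin.append_left]
  rfl

theorem Kp_eq (a'' : Fin (p+1) → Fin n) (v : Fin q → Fin n) (i : Fin n) (hi : (i : ℕ) = p) :
    Kp h a'' v i = a'' 0 := by
  have hc : Fin.cast h.symm i = Fin.natAdd p ⟨0, qpos⟩ := by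
    apply Fin.ext; simp [hi]
  rw [Kp, hc, Fin.append_right]
  have h0 : (⟨0, qpos⟩ : Fin q) = 0 := by apply Fin.ext; simp
  rw [h0, Function.update_self]

theorem Kp_gt (a'' : Fin (p+1) → Fin n) (v : Fin q → Fin n) (i : Fin n) (hi : p < (i : ℕ)) :
    Kp h a'' v i = v ⟨(i : ℕ) - p, by have := i.isLt; omega⟩ := by
  have hc : Fin.cast h.symm i = Fin.natAdd p ⟨(i : ℕ) - p, by have := i.isLt; omega⟩ := by
    apply Fin.ext; simp; omega
  rw [Kp, hc, Fin.append_right]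
  apply Function.update_of_ne
  intro hcon
  have := congrArg Fin.val hcon
  simp at this
  omega

theorem Kp_iota (a'' : Fin (p+1) → Fin n) (v : Fin q → Fin n) (j : Fin (p+1)) :
    Kp h a'' v (iotaF h j) = a'' j := by
  by_cases hj : (j : ℕ) = 0
  · have hj0 : j = 0 := Fin.ext hj
    rw [iotaF, if_pos hj, Kp_eq h a'' v _ rfl, hj0]
  · have hlt : (j : ℕ) - 1 < p := by have := j.isLt; omega
    rw [iotaF, if_neg hj]
    rw [Kp_lt h a'' v _ hlt]
    congr 1
    apply Fin.ext; simp; omega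

theorem Kp_not_range (a'' b'' : Fin (p+1) → Fin n) (v : Fin q → Fin n) (i : Fin n)
    (hi : i ∉ Set.range (iotaE h)) : Kp h a'' v i = Kp h b'' v i := by
  have hgt : p < (i : ℕ) := by
    by_contra hle
    push_neg at hle
    apply hi
    rcases Nat.lt_or_ge (i : ℕ) p with hlt | hge
    · refine ⟨⟨(i : ℕ) + 1, by omega⟩, Fin.ext ?_⟩
      simp [iotaE, iotaF]
    · have hip : (i : ℕ) = p := by omega
      refine ⟨0, Fin.ext ?_⟩
      simp [iotaE, iotaF, hip]
  rw [Kp_gt h a'' v i hgt, Kp_gt h b'' v i hgt]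

theorem Kp_comp_perm (a'' : Fin (p+1) → Fin n) (v : Fin q → Fin n)
    (σ : Equiv.Perm (Fin (p+1))) :
    Kp h (a'' ∘ ⇑σ) v = (Kp h a'' v) ∘ ⇑(σ.viaFintypeEmbedding (iotaE h)) := by
  funext i
  by_cases hi : i ∈ Set.range (iotaE h)
  · obtain ⟨j, hj⟩ := hi
    have hj' : iotaF h j = i := hj
    have h1 : (σ.viaFintypeEmbedding (iotaE h)) i = iotaF h (σ j) := by
      rw [← hj']
      exact Equiv.Perm.viaFintypeEmbedding_apply_image σ (iotaE h) j
    rw [Function.comp_apply, h1, ← hj', Kp_iota, Kp_iota]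
    rfl
  · have h1 : (σ.viaFintypeEmbedding (iotaE h)) i = i :=
      Equiv.Perm.viaFintypeEmbedding_apply_notMem_range σ (iotaE h) hi
    simp only [Function.comp_apply, h1]
    exact Kp_not_range h _ _ v i hi

theorem permSign_Kp_comp (a'' : Fin (p+1) → Fin n) (v : Fin q → Fin n)
    (σ : Equiv.Perm (Fin (p+1))) :
    permSign (Kp h (a'' ∘ ⇑σ) v) = permSign (Kp h a'' v) * (Equiv.Perm.sign σ : ℤ) := by
  rw [Kp_comp_perm, permSign_comp]
  congr 1
  rw [Equiv.Perm.viaFintypeEmbedding_sign]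

end DualAux

section DualAux2

variable {n p q : ℕ} [NeZero p] [NeZero q]

/-- The components of `L ∧ Fu` (unnormalized antisymmetrization). -/
def GW (Fu : (Fin p → Fin n) → ℝ) (L : Fin n → ℝ) (idx : Fin (p+1) → Fin n) : ℝ :=
  ∑ σ : Equiv.Perm (Fin (p+1)), ((Equiv.Perm.sign σ : ℤ) : ℝ) *
    (L (idx (σ 0)) * Fu fun m => idx (σ m.succ))

theorem comp_perm_bijective {α : Type*} (σ : Equiv.Perm (Fin (p+1))) :
    Function.Bijective (fun f : Fin (p+1) → α => f ∘ ⇑σ) := by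
  constructor
  · intro f g hfg
    funext x
    have := congrFun hfg (σ.symm x)
    simpa using this
  · intro f
    exact ⟨f ∘ ⇑σ.symm, by funext x; simp⟩

theorem GW_comp (Fu : (Fin p → Fin n) → ℝ) (L : Fin n → ℝ) (idx : Fin (p+1) → Fin n)
    (τ : Equiv.Perm (Fin (p+1))) :
    GW Fu L (idx ∘ ⇑τ) = ((Equiv.Perm.sign τ : ℤ) : ℝ) * GW Fu L idx := by
  rw [GW, GW, Finset.mul_sum]
  apply Fintype.sum_bijective (fun σ => τ * σ) (Group.mulLeft_bijective τ)
  intro σ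
  have hs : ((Equiv.Perm.sign (τ * σ) : ℤ) : ℝ) =
      ((Equiv.Perm.sign τ : ℤ) : ℝ) * ((Equiv.Perm.sign σ : ℤ) : ℝ) := by
    rw [Equiv.Perm.sign_mul]; push_cast; ring
  have happ : ∀ m : Fin (p+1), (idx ∘ ⇑τ) (σ m) = idx ((τ * σ) m) := by
    intro m; simp [Equiv.Perm.mul_apply]
  rw [hs]
  have h1 : (L ((idx ∘ ⇑τ) (σ 0)) * Fu fun m => (idx ∘ ⇑τ) (σ m.succ)) =
      (L (idx ((τ * σ) 0)) * Fu fun m => idx ((τ * σ) m.succ)) := by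
    rw [happ 0]
    rfl
  rw [h1]
  have h5 := sign_mul_self_real τ
  linear_combination (-(((Equiv.Perm.sign σ : ℤ) : ℝ)) *
    (L (idx ((τ * σ) 0)) * Fu fun m => idx ((τ * σ) m.succ))) * h5

/-- Antisymmetrization lemma: contracting with the alternating `permSign (Kp …)`
factor, a tensor can be replaced by `(p+1)!⁻¹` times its antisymmetrization. -/
theorem sum_antisymmetrize (h : p + q = n) (Fu : (Fin p → Fin n) → ℝ) (L : Fin n → ℝ)
    (v : Fin q → Fin n) :
    ∑ a'' : Fin (p+1) → Fin n, GW Fu L a'' * ((permSign (Kp h a'' v) : ℤ) : ℝ)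
    = ((p+1).factorial : ℝ) *
      ∑ a'' : Fin (p+1) → Fin n,
        (L (a'' 0) * Fu (Fin.tail a'')) * ((permSign (Kp h a'' v) : ℤ) : ℝ) := by
  have key : ∀ σ : Equiv.Perm (Fin (p+1)),
      (∑ a'' : Fin (p+1) → Fin n, ((Equiv.Perm.sign σ : ℤ) : ℝ) *
        (L (a'' (σ 0)) * Fu fun m => a'' (σ m.succ)) * ((permSign (Kp h a'' v) : ℤ) : ℝ))
      = ∑ a'' : Fin (p+1) → Fin n,
        (L (a'' 0) * Fu (Fin.tail a'')) * ((permSign (Kp h a'' v) : ℤ) : ℝ) := by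
    intro σ
    symm
    apply Fintype.sum_bijective (fun f : Fin (p+1) → Fin n => f ∘ ⇑σ⁻¹)
      (comp_perm_bijective σ⁻¹)
    intro a''
    have h1 : (a'' ∘ ⇑σ⁻¹) (σ 0) = a'' 0 := by simp
    have h2 : (fun m => (a'' ∘ ⇑σ⁻¹) (σ m.succ)) = Fin.tail a'' := by
      funext m; simp [Fin.tail]
    have h3 : ((permSign (Kp h (a'' ∘ ⇑σ⁻¹) v) : ℤ) : ℝ)
        = ((permSign (Kp h a'' v) : ℤ) : ℝ) * ((Equiv.Perm.sign σ⁻¹ : ℤ) : ℝ) := by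
      rw [permSign_Kp_comp]; push_cast; ring
    rw [h1, h2, h3]
    have h4 : ((Equiv.Perm.sign σ⁻¹ : ℤ) : ℝ) = ((Equiv.Perm.sign σ : ℤ) : ℝ) := by
      rw [Equiv.Perm.sign_inv]
    rw [h4]
    have h5 := sign_mul_self_real σ
    linear_combination (-(L (a'' 0) * Fu (Fin.tail a'')) *
      ((permSign (Kp h a'' v) : ℤ) : ℝ)) * h5
  calc ∑ a'' : Fin (p+1) → Fin n, GW Fu L a'' * ((permSign (Kp h a'' v) : ℤ) : ℝ)
      = ∑ a'' : Fin (p+1) → Fin n, ∑ σ : Equiv.Perm (Fin (p+1)),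
          ((Equiv.Perm.sign σ : ℤ) : ℝ) *
          (L (a'' (σ 0)) * Fu fun m => a'' (σ m.succ)) *
          ((permSign (Kp h a'' v) : ℤ) : ℝ) := by
        apply Finset.sum_congr rfl
        intro a'' _
        rw [GW, Finset.sum_mul]
    _ = ∑ σ : Equiv.Perm (Fin (p+1)), ∑ a'' : Fin (p+1) → Fin n,
          ((Equiv.Perm.sign σ : ℤ) : ℝ) *
          (L (a'' (σ 0)) * Fu fun m => a'' (σ m.succ)) *
          ((permSign (Kp h a'' v) : ℤ) : ℝ) := Finset.sum_comm
    _ = ∑ _σ : Equiv.Perm (Fin (p+1)), ∑ a'' : Fin (p+1) → Fin n,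
          (L (a'' 0) * Fu (Fin.tail a'')) * ((permSign (Kp h a'' v) : ℤ) : ℝ) := by
        apply Finset.sum_congr rfl
        intro σ _
        exact key σ
    _ = ((p+1).factorial : ℝ) * ∑ a'' : Fin (p+1) → Fin n,
          (L (a'' 0) * Fu (Fin.tail a'')) * ((permSign (Kp h a'' v) : ℤ) : ℝ) := by
        rw [Finset.sum_const, Finset.card_univ, Fintype.card_perm, Fintype.card_fin,
          nsmul_eq_mul]

end DualAux2

section DualAux3

variable {n p q : ℕ} [NeZero p] [NeZero q]

/-- Raise all indices of a pointwise tensor with `g⁻¹`. -/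
def raiseF (g : Matrix (Fin n) (Fin n) ℝ) {k : ℕ} (X : (Fin k → Fin n) → ℝ) :
    (Fin k → Fin n) → ℝ := fun a => ∑ c, (∏ m, g⁻¹ (a m) (c m)) * X c

theorem isUnit_det_of_lor (g : Matrix (Fin n) (Fin n) ℝ)
    (hlor : ∃ P : Matrix (Fin n) (Fin n) ℝ, IsUnit P.det ∧
      P.transpose * g * P = Matrix.diagonal fun i : Fin n => if (i : ℕ) = 0 then (-1 : ℝ) else 1) :
    IsUnit g.det := by
  obtain ⟨P, _, hPg⟩ := hlor
  have hdet := congrArg Matrix.det hPg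
  rw [Matrix.det_mul, Matrix.det_mul, Matrix.det_transpose, Matrix.det_diagonal] at hdet
  have hprod : (∏ i : Fin n, (if (i : ℕ) = 0 then (-1 : ℝ) else 1)) ≠ 0 := by
    apply Finset.prod_ne_zero_iff.mpr
    intro i _
    split <;> norm_num
  rw [isUnit_iff_ne_zero]
  intro h0
  rw [h0] at hdet
  simp only [mul_zero, zero_mul] at hdet
  exact hprod hdet.symm

theorem prod_ite_eq_fun {k : ℕ} (a d : Fin k → Fin n) :
    (∏ m, if a m = d m then (1 : ℝ) else 0) = if a = d then 1 else 0 := by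
  by_cases had : a = d
  · subst had; simp
  · rw [if_neg had]
    obtain ⟨m, hm⟩ : ∃ m, a m ≠ d m := by
      by_contra hc; push_neg at hc; exact had (funext hc)
    exact Finset.prod_eq_zero (Finset.mem_univ m) (if_neg hm)

theorem lower_raise (g : Matrix (Fin n) (Fin n) ℝ) (hg : g * g⁻¹ = 1) {k : ℕ}
    (X : (Fin k → Fin n) → ℝ) (a : Fin k → Fin n) :
    ∑ c : Fin k → Fin n, (∏ m, g (a m) (c m)) * raiseF g X c = X a := by
  calc ∑ c : Fin k → Fin n, (∏ m, g (a m) (c m)) * raiseF g X c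
      = ∑ c : Fin k → Fin n, ∑ d : Fin k → Fin n,
          (∏ m, g (a m) (c m) * g⁻¹ (c m) (d m)) * X d := by
        apply Finset.sum_congr rfl; intro c _
        rw [raiseF, Finset.mul_sum]
        apply Finset.sum_congr rfl; intro d _
        rw [Finset.prod_mul_distrib]; ring
    _ = ∑ d : Fin k → Fin n, (∑ c : Fin k → Fin n,
          ∏ m, g (a m) (c m) * g⁻¹ (c m) (d m)) * X d := by
        rw [Finset.sum_comm]
        apply Finset.sum_congr rfl; intro d _
        rw [Finset.sum_mul]
    _ = ∑ d : Fin k → Fin n, (∏ m, ∑ j, g (a m) j * g⁻¹ j (d m)) * X d := by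
        apply Finset.sum_congr rfl; intro d _
        congr 1
        have hs := Finset.sum_prod_piFinset (Finset.univ : Finset (Fin n))
          (fun m j => g (a m) j * g⁻¹ j (d m))
        rw [Fintype.piFinset_univ] at hs
        exact hs
    _ = ∑ d : Fin k → Fin n, (if a = d then 1 else 0) * X d := by
        apply Finset.sum_congr rfl; intro d _
        have h1 : (∏ m, ∑ j, g (a m) j * g⁻¹ j (d m))
            = ∏ m, (1 : Matrix (Fin n) (Fin n) ℝ) (a m) (d m) := by
          apply Finset.prod_congr rfl; intro m _
          rw [← Matrix.mul_apply, hg]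
        have h2 : (∏ m, (1 : Matrix (Fin n) (Fin n) ℝ) (a m) (d m))
            = ∏ m, if a m = d m then (1 : ℝ) else 0 := by
          apply Finset.prod_congr rfl; intro m _
          rw [Matrix.one_apply]
        rw [h1, h2, prod_ite_eq_fun]
    _ = X a := by simp

theorem inv_contract (g : Matrix (Fin n) (Fin n) ℝ) (hg' : g⁻¹ * g = 1) (ℓ : Fin n → ℝ)
    (x : Fin n) : ∑ d0, g⁻¹ x d0 * (∑ b, g d0 b * ℓ b) = ℓ x := by
  calc ∑ d0, g⁻¹ x d0 * (∑ b, g d0 b * ℓ b)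
      = ∑ d0, ∑ b, (g⁻¹ x d0 * g d0 b) * ℓ b := by
        apply Finset.sum_congr rfl; intro d0 _
        rw [Finset.mul_sum]
        apply Finset.sum_congr rfl; intro b _; ring
    _ = ∑ b, (∑ d0, g⁻¹ x d0 * g d0 b) * ℓ b := by
        rw [Finset.sum_comm]
        apply Finset.sum_congr rfl; intro b _
        rw [Finset.sum_mul]
    _ = ∑ b, (1 : Matrix (Fin n) (Fin n) ℝ) x b * ℓ b := by
        apply Finset.sum_congr rfl; intro b _
        rw [← Matrix.mul_apply, hg']
    _ = ℓ x := by simp [Matrix.one_apply]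

theorem raise_wedge (g : Matrix (Fin n) (Fin n) ℝ) (hg' : g⁻¹ * g = 1)
    (F : (Fin p → Fin n) → ℝ) (ℓ : Fin n → ℝ) (a'' : Fin (p+1) → Fin n) :
    raiseF g (GW F (fun x => ∑ b, g x b * ℓ b)) a'' = GW (raiseF g F) ℓ a'' := by
  set ω : Fin n → ℝ := fun x => ∑ b, g x b * ℓ b with hω
  calc raiseF g (GW F ω) a''
      = ∑ σ : Equiv.Perm (Fin (p+1)), ∑ c : Fin (p+1) → Fin n,
          ((Equiv.Perm.sign σ : ℤ) : ℝ) * (∏ m, g⁻¹ (a'' m) (c m)) *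
          (ω (c (σ 0)) * F fun m => c (σ m.succ)) := by
        rw [raiseF, Finset.sum_comm]
        apply Finset.sum_congr rfl; intro c _
        rw [GW, Finset.mul_sum]
        apply Finset.sum_congr rfl; intro σ _; ring
    _ = ∑ σ : Equiv.Perm (Fin (p+1)),
          ((Equiv.Perm.sign σ : ℤ) : ℝ) *
          (ℓ (a'' (σ 0)) * raiseF g F fun m => a'' (σ m.succ)) := by
        apply Finset.sum_congr rfl; intro σ _
        have step1 : ∑ c : Fin (p+1) → Fin n,
            ((Equiv.Perm.sign σ : ℤ) : ℝ) * (∏ m, g⁻¹ (a'' m) (c m)) *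
            (ω (c (σ 0)) * F fun m => c (σ m.succ))
            = ∑ d : Fin (p+1) → Fin n,
            ((Equiv.Perm.sign σ : ℤ) : ℝ) * (∏ m, g⁻¹ (a'' (σ m)) (d m)) *
            (ω (d 0) * F fun m : Fin p => d m.succ) := by
          symm
          apply Fintype.sum_bijective (fun d : Fin (p+1) → Fin n => d ∘ ⇑σ⁻¹)
            (comp_perm_bijective σ⁻¹)
          intro d
          have hp : (∏ m, g⁻¹ (a'' (σ m)) (d m)) = ∏ m, g⁻¹ (a'' m) ((d ∘ ⇑σ⁻¹) m) := by
            rw [← Equiv.prod_comp σ (fun m => g⁻¹ (a'' m) ((d ∘ ⇑σ⁻¹) m))]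
            apply Finset.prod_congr rfl; intro m _
            simp
          rw [hp]
          have h0 : (d ∘ ⇑σ⁻¹) (σ 0) = d 0 := by simp
          have hsucc : (fun m : Fin p => (d ∘ ⇑σ⁻¹) (σ m.succ)) = fun m : Fin p => d m.succ := by
            funext m; simp
          rw [h0, hsucc]
        rw [step1]
        have step2 : ∑ d : Fin (p+1) → Fin n,
            ((Equiv.Perm.sign σ : ℤ) : ℝ) * (∏ m, g⁻¹ (a'' (σ m)) (d m)) *
            (ω (d 0) * F fun m : Fin p => d m.succ)
            = ∑ x : Fin n × (Fin p → Fin n),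
            ((Equiv.Perm.sign σ : ℤ) : ℝ) *
            ((g⁻¹ (a'' (σ 0)) x.1 * ω x.1) *
             ((∏ m : Fin p, g⁻¹ (a'' (σ m.succ)) (x.2 m)) * F x.2)) := by
          rw [← Equiv.sum_comp (Fin.consEquiv fun _ : Fin (p+1) => Fin n)]
          apply Finset.sum_congr rfl
          intro x _
          have hc : (Fin.consEquiv fun _ : Fin (p+1) => Fin n) x
              = (Fin.cons x.1 x.2 : Fin (p+1) → Fin n) := rfl
          rw [hc]
          have hprod : (∏ m, g⁻¹ (a'' (σ m)) ((Fin.cons x.1 x.2 : Fin (p+1) → Fin n) m))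
              = g⁻¹ (a'' (σ 0)) x.1 * ∏ m : Fin p, g⁻¹ (a'' (σ m.succ)) (x.2 m) := by
            rw [Fin.prod_univ_succ]
            simp
          have h0 : (Fin.cons x.1 x.2 : Fin (p+1) → Fin n) 0 = x.1 := rfl
          have hsucc : (fun m => (Fin.cons x.1 x.2 : Fin (p+1) → Fin n) m.succ) = x.2 := by
            funext m; simp
          rw [hprod, h0, hsucc]
          ring
        rw [step2, Fintype.sum_prod_type]
        have hfact : (∑ x1, g⁻¹ (a'' (σ 0)) x1 * ω x1) *
            (∑ x2 : Fin p → Fin n, (∏ m : Fin p, g⁻¹ (a'' (σ m.succ)) (x2 m)) * F x2)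
            = ∑ x1, ∑ x2 : Fin p → Fin n, (g⁻¹ (a'' (σ 0)) x1 * ω x1) *
              ((∏ m : Fin p, g⁻¹ (a'' (σ m.succ)) (x2 m)) * F x2) :=
          Fintype.sum_mul_sum _ _
        have hl : ∑ x1, g⁻¹ (a'' (σ 0)) x1 * ω x1 = ℓ (a'' (σ 0)) := inv_contract g hg' ℓ _
        have hr : (∑ x2 : Fin p → Fin n, (∏ m : Fin p, g⁻¹ (a'' (σ m.succ)) (x2 m)) * F x2)
            = raiseF g F fun m => a'' (σ m.succ) := rfl
        calc ∑ x1 : Fin n, ∑ x2 : Fin p → Fin n, ((Equiv.Perm.sign σ : ℤ) : ℝ) *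
              ((g⁻¹ (a'' (σ 0)) x1 * ω x1) *
               ((∏ m : Fin p, g⁻¹ (a'' (σ m.succ)) (x2 m)) * F x2))
            = ((Equiv.Perm.sign σ : ℤ) : ℝ) * ∑ x1 : Fin n, ∑ x2 : Fin p → Fin n,
              (g⁻¹ (a'' (σ 0)) x1 * ω x1) *
              ((∏ m : Fin p, g⁻¹ (a'' (σ m.succ)) (x2 m)) * F x2) := by
              refine Eq.trans (Finset.sum_congr rfl fun x1 _ => ?_)
                (Finset.mul_sum Finset.univ _ _).symm
              exact (Finset.mul_sum Finset.univ _ _).symm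
          _ = ((Equiv.Perm.sign σ : ℤ) : ℝ) *
              ((∑ x1, g⁻¹ (a'' (σ 0)) x1 * ω x1) *
               (∑ x2 : Fin p → Fin n, (∏ m : Fin p, g⁻¹ (a'' (σ m.succ)) (x2 m)) * F x2)) := by
              rw [← hfact]
          _ = ((Equiv.Perm.sign σ : ℤ) : ℝ) *
              (ℓ (a'' (σ 0)) * raiseF g F fun m => a'' (σ m.succ)) := by
              rw [hl, hr]
    _ = GW (raiseF g F) ℓ a'' := rfl

end DualAux3

section DualAux4

variable {n p q : ℕ} [NeZero p] [NeZero q]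

theorem exists_iota (h : p + q = n) (i : Fin n) (hi : (i : ℕ) ≤ p) :
    ∃ j, iotaF h j = i := by
  rcases Nat.lt_or_ge (i : ℕ) p with hlt | hge
  · exact ⟨⟨(i : ℕ) + 1, by omega⟩, Fin.ext (by simp [iotaF])⟩
  · have hip : (i : ℕ) = p := by omega
    refine ⟨0, Fin.ext ?_⟩
    simp [iotaF]
    omega

theorem Dval (h : p + q = n) (g : Matrix (Fin n) (Fin n) ℝ) (F : (Fin p → Fin n) → ℝ)
    (ℓ : Fin n → ℝ) (v : Fin q → Fin n) :
    (∑ b, ℓ b * hodgeAt h g F (Function.update v 0 b))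
    = (1 / (p.factorial : ℝ)) * Real.sqrt |g.det| *
      ∑ a'' : Fin (p+1) → Fin n,
        (ℓ (a'' 0) * raiseF g F (Fin.tail a'')) * ((permSign (Kp h a'' v) : ℤ) : ℝ) := by
  have hra : ∀ a : Fin p → Fin n,
      (∑ c : Fin p → Fin n, (∏ m, g⁻¹ (a m) (c m)) * F c) = raiseF g F a := fun a => rfl
  have hKp : ∀ (b : Fin n) (a : Fin p → Fin n),
      (fun i => Fin.append a (Function.update v 0 b) (Fin.cast h.symm i))
        = Kp h (Fin.cons b a) v := by
    intro b a
    funext i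
    simp only [Kp, Fin.tail_cons, Fin.cons_zero]
  calc (∑ b, ℓ b * hodgeAt h g F (Function.update v 0 b))
      = ∑ b, ∑ a : Fin p → Fin n, (1 / (p.factorial : ℝ)) * Real.sqrt |g.det| *
          ((ℓ b * raiseF g F a) * ((permSign (Kp h (Fin.cons b a) v) : ℤ) : ℝ)) := by
        apply Finset.sum_congr rfl; intro b _
        simp only [hodgeAt, hra, hKp]
        rw [Finset.mul_sum, Finset.mul_sum]
        apply Finset.sum_congr rfl; intro a _
        ring
    _ = ∑ a'' : Fin (p+1) → Fin n, (1 / (p.factorial : ℝ)) * Real.sqrt |g.det| *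
          ((ℓ (a'' 0) * raiseF g F (Fin.tail a'')) * ((permSign (Kp h a'' v) : ℤ) : ℝ)) := by
        symm
        rw [← Equiv.sum_comp (Fin.consEquiv fun _ : Fin (p+1) => Fin n),
          Fintype.sum_prod_type]
        apply Finset.sum_congr rfl; intro b _
        apply Finset.sum_congr rfl; intro a _
        have hc : (Fin.consEquiv fun _ : Fin (p+1) => Fin n) (b, a)
            = (Fin.cons b a : Fin (p+1) → Fin n) := rfl
        rw [hc, Fin.cons_zero, Fin.tail_cons]
    _ = (1 / (p.factorial : ℝ)) * Real.sqrt |g.det| *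
        ∑ a'' : Fin (p+1) → Fin n,
          (ℓ (a'' 0) * raiseF g F (Fin.tail a'')) * ((permSign (Kp h a'' v) : ℤ) : ℝ) := by
        rw [Finset.mul_sum]

theorem GW_eq_zero_of (h : p + q = n) (Gu : (Fin (p+1) → Fin n) → ℝ)
    (halt : ∀ (a'' : Fin (p+1) → Fin n) (τ : Equiv.Perm (Fin (p+1))),
      Gu (a'' ∘ ⇑τ) = ((Equiv.Perm.sign τ : ℤ) : ℝ) * Gu a'')
    (hzero : ∀ v : Fin q → Fin n,
      ∑ a'' : Fin (p+1) → Fin n, Gu a'' * ((permSign (Kp h a'' v) : ℤ) : ℝ) = 0)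
    (a'' : Fin (p+1) → Fin n) : Gu a'' = 0 := by
  classical
  by_cases hinj : Function.Injective a''
  case neg =>
    rw [Function.Injective] at hinj
    push_neg at hinj
    obtain ⟨i, j, hij, hne⟩ := hinj
    have hswap : a'' ∘ ⇑(Equiv.swap i j) = a'' := by
      funext x
      rcases eq_or_ne x i with rfl | hxi
      · simp only [Function.comp_apply, Equiv.swap_apply_left]
        exact hij.symm
      rcases eq_or_ne x j with rfl | hxj
      · simp only [Function.comp_apply, Equiv.swap_apply_right]
        exact hij
      · simp [Equiv.swap_apply_of_ne_of_ne hxi hxj]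
    have hh := halt a'' (Equiv.swap i j)
    rw [hswap, Equiv.Perm.sign_swap hne] at hh
    norm_num at hh
    linarith
  case pos =>
    set s : Finset (Fin n) := Finset.univ \ Finset.image a'' Finset.univ with hs
    have hcard_im : (Finset.image a'' Finset.univ).card = p + 1 := by
      rw [Finset.card_image_of_injective _ hinj, Finset.card_univ, Fintype.card_fin]
    have hcard : s.card = q - 1 := by
      rw [hs, Finset.card_sdiff_of_subset (Finset.subset_univ _), Finset.card_univ, Fintype.card_fin,
        hcard_im]
      have := qpos (q := q)
      omega
    obtain ⟨w, hw_inj, hw_mem, hw_surj⟩ : ∃ w : Fin (q-1) → Fin n,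
        Function.Injective w ∧ (∀ k, w k ∈ s) ∧ ∀ x ∈ s, ∃ k, w k = x := by
      refine ⟨fun k => (s.orderIsoOfFin hcard k : Fin n), ?_, ?_, ?_⟩
      · intro k1 k2 hk
        exact (s.orderIsoOfFin hcard).injective (Subtype.ext hk)
      · intro k
        exact (s.orderIsoOfFin hcard k).2
      · intro x hx
        obtain ⟨k, hk⟩ := (s.orderIsoOfFin hcard).surjective ⟨x, hx⟩
        exact ⟨k, congrArg Subtype.val hk⟩
    set v : Fin q → Fin n := fun k => if hk : (k : ℕ) = 0 then a'' 0
      else w ⟨(k : ℕ) - 1, by have := k.isLt; omega⟩ with hv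
    have hVgt : ∀ (b'' : Fin (p+1) → Fin n) (i : Fin n) (hi : p < (i : ℕ)),
        Kp h b'' v i = w ⟨(i : ℕ) - p - 1, by
          have := i.isLt; have := qpos (q := q); omega⟩ := by
      intro b'' i hi
      rw [Kp_gt h b'' v i hi]
      have hne : ¬ ((⟨(i : ℕ) - p, by have := i.isLt; omega⟩ : Fin q) : ℕ) = 0 := by
        simp only []
        omega
      simp only [hv]
      rw [dif_neg hne]
    have hinj2 : Function.Injective (Kp h a'' v) := by
      intro i1 i2 he
      rcases Nat.lt_or_ge p (i1 : ℕ) with hgt1 | hle1 <;>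
        rcases Nat.lt_or_ge p (i2 : ℕ) with hgt2 | hle2
      · rw [hVgt a'' i1 hgt1, hVgt a'' i2 hgt2] at he
        have h1 := hw_inj he
        have h2 := congrArg Fin.val h1
        simp only [] at h2
        apply Fin.ext
        omega
      · exfalso
        obtain ⟨j, hj⟩ := exists_iota h i2 hle2
        rw [hVgt a'' i1 hgt1, ← hj, Kp_iota] at he
        have hmem : a'' j ∈ s := he ▸ hw_mem _
        rw [hs, Finset.mem_sdiff] at hmem
        exact hmem.2 (Finset.mem_image_of_mem a'' (Finset.mem_univ j))
      · exfalso
        obtain ⟨j, hj⟩ := exists_iota h i1 hle1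
        rw [hVgt a'' i2 hgt2, ← hj, Kp_iota] at he
        have hmem : a'' j ∈ s := he.symm ▸ hw_mem _
        rw [hs, Finset.mem_sdiff] at hmem
        exact hmem.2 (Finset.mem_image_of_mem a'' (Finset.mem_univ j))
      · obtain ⟨j1, hj1⟩ := exists_iota h i1 hle1
        obtain ⟨j2, hj2⟩ := exists_iota h i2 hle2
        rw [← hj1, ← hj2, Kp_iota, Kp_iota] at he
        rw [← hj1, ← hj2, hinj he]
    have hbij : Function.Bijective (Kp h a'' v) := Finite.injective_iff_bijective.mp hinj2
    have hpsgn_ne : ((permSign (Kp h a'' v) : ℤ) : ℝ) ≠ 0 := by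
      exact_mod_cast permSign_ne_zero hbij
    have hz := hzero v
    rw [← Finset.sum_filter_add_sum_filter_not Finset.univ
      (· ∈ Finset.image (fun τ : Equiv.Perm (Fin (p+1)) => a'' ∘ ⇑τ) Finset.univ)] at hz
    have hnot : (∑ b'' ∈ Finset.univ.filter
        (fun b'' => ¬ b'' ∈ Finset.image (fun τ : Equiv.Perm (Fin (p+1)) => a'' ∘ ⇑τ)
          Finset.univ),
        Gu b'' * ((permSign (Kp h b'' v) : ℤ) : ℝ)) = 0 := by
      apply Finset.sum_eq_zero
      intro b'' hb''
      rw [Finset.mem_filter] at hb''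
      by_cases hps : permSign (Kp h b'' v) = 0
      · rw [hps]; simp
      · exfalso
        apply hb''.2
        have hbij' : Function.Bijective (Kp h b'' v) := bijective_of_permSign_ne_zero hps
        have hbinj : Function.Injective b'' := by
          intro j1 j2 hj
          have hk : Kp h b'' v (iotaF h j1) = Kp h b'' v (iotaF h j2) := by
            rw [Kp_iota, Kp_iota, hj]
          exact iotaF_injective h (hbij'.injective hk)
        have hrange : ∀ j, b'' j ∈ Finset.image a'' Finset.univ := by
          intro j
          by_contra hmem
          have hbs : b'' j ∈ s := by
            rw [hs, Finset.mem_sdiff]; exact ⟨Finset.mem_univ _, hmem⟩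
          obtain ⟨k, hk⟩ := hw_surj _ hbs
          have hkn : (p + 1 + (k : ℕ)) < n := by
            have := k.isLt; have := qpos (q := q); omega
          have hgt : p < ((⟨p + 1 + (k : ℕ), hkn⟩ : Fin n) : ℕ) := by
            simp only []; omega
          have h3 : Kp h b'' v ⟨p + 1 + (k : ℕ), hkn⟩ = w k := by
            rw [hVgt b'' _ hgt]
            congr 1
            apply Fin.ext
            simp only []
            omega
          have h4 : Kp h b'' v (iotaF h j) = w k := by rw [Kp_iota, ← hk]
          have h5 := hbij'.injective (h4.trans h3.symm)
          have h6 : ((iotaF h j : Fin n) : ℕ) ≤ p := by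
            rw [iotaF]
            split <;> simp only [] <;> have := j.isLt <;> omega
          have h7 := congrArg Fin.val h5
          simp only [] at h7
          omega
        have hchoice : ∀ j, ∃ j', a'' j' = b'' j := by
          intro j
          have hm := hrange j
          rw [Finset.mem_image] at hm
          obtain ⟨j', _, hj'⟩ := hm
          exact ⟨j', hj'⟩
        choose τ0 hτ0 using hchoice
        have hτinj : Function.Injective τ0 := by
          intro j1 j2 hj
          apply hbinj
          rw [← hτ0 j1, ← hτ0 j2, hj]
        have hτbij : Function.Bijective τ0 := Finite.injective_iff_bijective.mp hτinj
        rw [Finset.mem_image]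
        refine ⟨Equiv.ofBijective τ0 hτbij, Finset.mem_univ _, ?_⟩
        funext j
        exact hτ0 j
    rw [hnot, add_zero] at hz
    have hfil : Finset.univ.filter
        (· ∈ Finset.image (fun τ : Equiv.Perm (Fin (p+1)) => a'' ∘ ⇑τ) Finset.univ)
        = Finset.image (fun τ : Equiv.Perm (Fin (p+1)) => a'' ∘ ⇑τ) Finset.univ := by
      apply Finset.filter_univ_mem
    rw [hfil] at hz
    rw [Finset.sum_image (fun τ1 _ τ2 _ he => by
      ext x
      exact congrArg Fin.val (hinj (congrFun he x)))] at hz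
    have hterm : ∀ τ : Equiv.Perm (Fin (p+1)),
        Gu (a'' ∘ ⇑τ) * ((permSign (Kp h (a'' ∘ ⇑τ) v) : ℤ) : ℝ)
        = Gu a'' * ((permSign (Kp h a'' v) : ℤ) : ℝ) := by
      intro τ
      rw [halt a'' τ, permSign_Kp_comp]
      push_cast
      have h5 := sign_mul_self_real τ
      linear_combination (Gu a'' * ((permSign (Kp h a'' v) : ℤ) : ℝ)) * h5
    rw [Finset.sum_congr rfl (fun τ _ => hterm τ)] at hz
    rw [Finset.sum_const, Finset.card_univ, Fintype.card_perm, Fintype.card_fin,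
      nsmul_eq_mul] at hz
    have hfac : ((p+1).factorial : ℝ) ≠ 0 := Nat.cast_ne_zero.mpr (Nat.factorial_ne_zero _)
    rcases mul_eq_zero.mp hz with hcon | hz2
    · exact absurd hcon hfac
    rcases mul_eq_zero.mp hz2 with hG | hcon
    · exact hG
    · exact absurd hcon hpsgn_ne

end DualAux4


/-- for a `p`-form `F` and a null vector `ℓ` on an `n`-dimensional
Lorentzian vector space, `ℓ^a F_{a…} = 0 ∧ ℓ_{[a}F_{b…]} = 0` is equivalent to
`ℓ^a F_{a…} = 0 ∧ ℓ^a (*F)_{a…} = 0`. -/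
theorem typeN_iff_dual_contraction {n p q : ℕ} [NeZero p] [NeZero q] (h : p + q = n)
    (g : Matrix (Fin n) (Fin n) ℝ) (hsym : g.IsSymm)
    (hlor : ∃ P : Matrix (Fin n) (Fin n) ℝ, IsUnit P.det ∧
      P.transpose * g * P = Matrix.diagonal fun i : Fin n => if (i : ℕ) = 0 then (-1 : ℝ) else 1)
    (F : (Fin p → Fin n) → ℝ)
    (hF : ∀ (idx : Fin p → Fin n) (σ : Equiv.Perm (Fin p)),
      F (idx ∘ σ) = ((Equiv.Perm.sign σ : ℤ) : ℝ) * F idx)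
    (ℓ : Fin n → ℝ) (hl0 : ℓ ≠ 0) (hnull : (∑ a, ∑ b, g a b * ℓ a * ℓ b) = 0) :
    ((∀ v : Fin p → Fin n, (∑ a, ℓ a * F (Function.update v 0 a)) = 0) ∧
      (∀ idx : Fin (p+1) → Fin n,
        (∑ σ : Equiv.Perm (Fin (p+1)), ((Equiv.Perm.sign σ : ℤ) : ℝ) *
          ((∑ b, g (idx (σ 0)) b * ℓ b) * F fun m => idx (σ m.succ))) = 0))
    ↔
    ((∀ v : Fin p → Fin n, (∑ a, ℓ a * F (Function.update v 0 a)) = 0) ∧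
      (∀ v : Fin q → Fin n, (∑ a, ℓ a * hodgeAt h g F (Function.update v 0 a)) = 0)) := by
  have hdet : IsUnit g.det := isUnit_det_of_lor g hlor
  have hg1 : g * g⁻¹ = 1 := Matrix.mul_nonsing_inv g hdet
  have hg2 : g⁻¹ * g = 1 := Matrix.nonsing_inv_mul g hdet
  have hsqrt : Real.sqrt |g.det| ≠ 0 :=
    ne_of_gt (Real.sqrt_pos.mpr (abs_pos.mpr (isUnit_iff_ne_zero.mp hdet)))
  have hfacp : (1 / (p.factorial : ℝ)) ≠ 0 :=
    one_div_ne_zero (Nat.cast_ne_zero.mpr p.factorial_ne_zero)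
  have hfacp1 : ((p+1).factorial : ℝ) ≠ 0 :=
    Nat.cast_ne_zero.mpr (Nat.factorial_ne_zero _)
  constructor
  · rintro ⟨h1, h2⟩
    refine ⟨h1, ?_⟩
    intro v
    rw [Dval h g F ℓ v]
    have hGzero : ∀ a'' : Fin (p+1) → Fin n, GW (raiseF g F) ℓ a'' = 0 := by
      intro a''
      rw [← raise_wedge g hg2 F ℓ a'']
      apply Finset.sum_eq_zero
      intro c _
      have hc : GW F (fun x => ∑ b, g x b * ℓ b) c = 0 := h2 c
      rw [hc, mul_zero]
    have hsum : (∑ a'' : Fin (p+1) → Fin n,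
        (ℓ (a'' 0) * raiseF g F (Fin.tail a'')) * ((permSign (Kp h a'' v) : ℤ) : ℝ)) = 0 := by
      have hanti := sum_antisymmetrize h (raiseF g F) ℓ v
      have hLHS : (∑ a'' : Fin (p+1) → Fin n,
          GW (raiseF g F) ℓ a'' * ((permSign (Kp h a'' v) : ℤ) : ℝ)) = 0 :=
        Finset.sum_eq_zero fun a'' _ => by rw [hGzero a'', zero_mul]
      rw [hLHS] at hanti
      exact (mul_eq_zero.mp hanti.symm).resolve_left hfacp1
    rw [hsum, mul_zero]
  · rintro ⟨h1, h2⟩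
    refine ⟨h1, ?_⟩
    intro idx
    have hS : ∀ v : Fin q → Fin n, (∑ a'' : Fin (p+1) → Fin n,
        (ℓ (a'' 0) * raiseF g F (Fin.tail a'')) * ((permSign (Kp h a'' v) : ℤ) : ℝ)) = 0 := by
      intro v
      have hD := h2 v
      rw [Dval h g F ℓ v] at hD
      rcases mul_eq_zero.mp hD with hc | hS0
      · rcases mul_eq_zero.mp hc with hc1 | hc2
        · exact absurd hc1 hfacp
        · exact absurd hc2 hsqrt
      · exact hS0
    have hPhi : ∀ v : Fin q → Fin n, (∑ a'' : Fin (p+1) → Fin n,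
        GW (raiseF g F) ℓ a'' * ((permSign (Kp h a'' v) : ℤ) : ℝ)) = 0 := by
      intro v
      rw [sum_antisymmetrize h (raiseF g F) ℓ v, hS v, mul_zero]
    have hGup : ∀ a'' : Fin (p+1) → Fin n, GW (raiseF g F) ℓ a'' = 0 :=
      GW_eq_zero_of h _ (fun a'' τ => GW_comp _ _ _ _) hPhi
    have hlow := lower_raise g hg1 (GW F (fun x => ∑ b, g x b * ℓ b)) idx
    have hzero2 : (∑ c : Fin (p+1) → Fin n, (∏ m, g (idx m) (c m)) *
        raiseF g (GW F (fun x => ∑ b, g x b * ℓ b)) c) = 0 := by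
      apply Finset.sum_eq_zero
      intro c _
      rw [raise_wedge g hg2 F ℓ c, hGup c, mul_zero]
    show GW F (fun x => ∑ b, g x b * ℓ b) idx = 0
    rw [← hlow]
    exact hzero2

end VSI
end
end

section
/- The four-dimensional Lorentzian metric ds² = 2 du [dr + ½(x r − x e^x) du] + e^x (dx² + e^{2u} dy²) (Petrov's metric) is Ricci-flat (a vacuum solution of Einstein's equations) and its Weyl tensor is of algebraic type III with multiple null direction ℓ = ∂_r. -/
open scoped BigOperators

noncomputable section

namespace VSI

/-! ### Auxiliary development for the Petrov metric -/

section PetrovAux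

open Real

/-- Evaluate `pd` from a `HasFDerivAt` witness. -/
lemma pd_eq' {f : Pt 4 → ℝ} {L : Pt 4 →L[ℝ] ℝ} {z : Pt 4} (h : HasFDerivAt f L z) (a : Fin 4) :
    pd f a z = L (Pi.single a 1) := by rw [pd, h.fderiv]

lemma hasP (i : Fin 4) (z : Pt 4) :
    HasFDerivAt (fun y : Pt 4 => y i) (ContinuousLinearMap.proj i : (Pt 4) →L[ℝ] ℝ) z :=
  (ContinuousLinearMap.proj i : (Pt 4) →L[ℝ] ℝ).hasFDerivAt

lemma pd_const (c : ℝ) (a : Fin 4) (z : Pt 4) : pd (fun _ : Pt 4 => c) a z = 0 := by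
  rw [pd_eq' (hasFDerivAt_const c z)]; simp

lemma pd_m1 (a : Fin 4) (z : Pt 4) :
    pd (fun y : Pt 4 => y 2 * y 1 - y 2 * Real.exp (y 2)) a z =
      (if a = 1 then z 2 else if a = 2 then z 1 - Real.exp (z 2) - z 2 * Real.exp (z 2) else 0) := by
  erw [pd_eq' (((hasP 2 z).mul (hasP 1 z)).sub ((hasP 2 z).mul ((hasP 2 z).exp)))]
  fin_cases a <;> (simp [ContinuousLinearMap.proj_apply, Pi.single_apply]; try ring)

lemma pd_m2 (a : Fin 4) (z : Pt 4) :
    pd (fun y : Pt 4 => Real.exp (y 2)) a z = (if a = 2 then Real.exp (z 2) else 0) := by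
  rw [pd_eq' ((hasP 2 z).exp)]
  fin_cases a <;> simp [ContinuousLinearMap.proj_apply, Pi.single_apply]

lemma pd_m3 (a : Fin 4) (z : Pt 4) :
    pd (fun y : Pt 4 => Real.exp (y 2 + 2 * y 0)) a z =
      (if a = 0 then 2 * Real.exp (z 2 + 2 * z 0)
       else if a = 2 then Real.exp (z 2 + 2 * z 0) else 0) := by
  erw [pd_eq' (((hasP 2 z).add ((hasFDerivAt_const (2:ℝ) z).mul (hasP 0 z))).exp)]
  fin_cases a <;> (simp [ContinuousLinearMap.proj_apply, Pi.single_apply]; try ring)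

lemma pd_G1 (a : Fin 4) (z : Pt 4) :
    pd (fun y : Pt 4 => -(1/2 : ℝ) * y 2) a z = (if a = 2 then -(1:ℝ)/2 else 0) := by
  rw [pd_eq' ((hasP 2 z).const_mul (-(1/2 : ℝ)))]
  fin_cases a <;> (simp [ContinuousLinearMap.proj_apply, Pi.single_apply]; try norm_num)

lemma pd_G2 (a : Fin 4) (z : Pt 4) :
    pd (fun y : Pt 4 => (1/2 : ℝ) * (y 2 * y 2 * (y 1 - Real.exp (y 2)))) a z =
      (if a = 1 then z 2 * z 2 / 2
       else if a = 2 then z 2 * (z 1 - Real.exp (z 2)) - z 2 * z 2 * Real.exp (z 2) / 2 else 0) := by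
  erw [pd_eq' ((((hasP 2 z).mul (hasP 2 z)).mul ((hasP 1 z).sub ((hasP 2 z).exp))).const_mul
    ((1/2 : ℝ)))]
  fin_cases a <;> (simp [ContinuousLinearMap.proj_apply, Pi.single_apply]; try ring)

lemma pd_G3 (a : Fin 4) (z : Pt 4) :
    pd (fun y : Pt 4 => (1/2 : ℝ) * y 2) a z = (if a = 2 then (1:ℝ)/2 else 0) := by
  rw [pd_eq' ((hasP 2 z).const_mul ((1/2 : ℝ)))]
  fin_cases a <;> (simp [ContinuousLinearMap.proj_apply, Pi.single_apply]; try norm_num)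

lemma pd_G4 (a : Fin 4) (z : Pt 4) :
    pd (fun y : Pt 4 => (1/2 : ℝ) * (y 1 - Real.exp (y 2) - y 2 * Real.exp (y 2))) a z =
      (if a = 1 then (1:ℝ)/2
       else if a = 2 then -Real.exp (z 2) - z 2 * Real.exp (z 2) / 2 else 0) := by
  erw [pd_eq' ((((hasP 1 z).sub ((hasP 2 z).exp)).sub
    ((hasP 2 z).mul ((hasP 2 z).exp))).const_mul ((1/2 : ℝ)))]
  fin_cases a <;> (simp [ContinuousLinearMap.proj_apply, Pi.single_apply]; try ring)

lemma pd_G5 (a : Fin 4) (z : Pt 4) :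
    pd (fun y : Pt 4 => -Real.exp (y 2 + 2 * y 0)) a z =
      (if a = 0 then -(2 * Real.exp (z 2 + 2 * z 0))
       else if a = 2 then -Real.exp (z 2 + 2 * z 0) else 0) := by
  erw [pd_eq' ((((hasP 2 z).add ((hasFDerivAt_const (2:ℝ) z).mul (hasP 0 z))).exp).neg)]
  fin_cases a <;> (simp [ContinuousLinearMap.proj_apply, Pi.single_apply]; try ring)

lemma pd_G6 (a : Fin 4) (z : Pt 4) :
    pd (fun y : Pt 4 =>
        -(1/2 : ℝ) * ((y 1 - Real.exp (y 2) - y 2 * Real.exp (y 2)) * Real.exp (-(y 2)))) a z =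
      (if a = 1 then -(1/2 : ℝ) * Real.exp (-(z 2))
       else if a = 2 then
         (1/2 : ℝ) * (Real.exp (z 2) * Real.exp (-(z 2)) + z 1 * Real.exp (-(z 2))) else 0) := by
  erw [pd_eq' (((((hasP 1 z).sub ((hasP 2 z).exp)).sub ((hasP 2 z).mul ((hasP 2 z).exp))).mul
    (((hasP 2 z).neg).exp)).const_mul (-(1/2 : ℝ)))]
  fin_cases a <;> (simp [ContinuousLinearMap.proj_apply, Pi.single_apply]; try ring)

lemma pd_G7 (a : Fin 4) (z : Pt 4) :
    pd (fun y : Pt 4 => -(1/2 : ℝ) * Real.exp (2 * y 0)) a z =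
      (if a = 0 then -Real.exp (2 * z 0) else 0) := by
  erw [pd_eq' (((((hasFDerivAt_const (2:ℝ) z).mul (hasP 0 z)).exp)).const_mul (-(1/2 : ℝ)))]
  fin_cases a <;> (simp [ContinuousLinearMap.proj_apply, Pi.single_apply]; try ring)

end PetrovAux

section PetrovAux2

/-- Explicit inverse of the Petrov metric. -/
def GinvM (z : Pt 4) : Matrix (Fin 4) (Fin 4) ℝ := Matrix.of fun a b =>
  if (a = 0 ∧ b = 1) ∨ (a = 1 ∧ b = 0) then 1
  else if a = 1 ∧ b = 1 then -(z 2 * z 1 - z 2 * Real.exp (z 2))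
  else if a = 2 ∧ b = 2 then Real.exp (-(z 2))
  else if a = 3 ∧ b = 3 then Real.exp (-(z 2 + 2 * z 0))
  else 0

lemma Ginv_eq (z : Pt 4) : (petrovG z)⁻¹ = GinvM z := by
  apply Matrix.inv_eq_right_inv
  ext i j
  fin_cases i <;> fin_cases j <;>
    simp [petrovG, GinvM, Matrix.mul_apply, Fin.sum_univ_four, ← Real.exp_add] <;> ring_nf

/-- Explicit Christoffel symbols of the Petrov metric. -/
def Gam (z : Pt 4) (a b c : Fin 4) : ℝ :=
  if a = 0 then (if b = 0 ∧ c = 0 then -(1/2 : ℝ) * z 2 else 0)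
  else if a = 1 then
    (if b = 0 ∧ c = 0 then (1/2 : ℝ) * (z 2 * z 2 * (z 1 - Real.exp (z 2)))
     else if (b = 0 ∧ c = 1) ∨ (b = 1 ∧ c = 0) then (1/2 : ℝ) * z 2
     else if (b = 0 ∧ c = 2) ∨ (b = 2 ∧ c = 0) then
       (1/2 : ℝ) * (z 1 - Real.exp (z 2) - z 2 * Real.exp (z 2))
     else if b = 3 ∧ c = 3 then -Real.exp (z 2 + 2 * z 0)
     else 0)
  else if a = 2 then
    (if b = 0 ∧ c = 0 then
       -(1/2 : ℝ) * ((z 1 - Real.exp (z 2) - z 2 * Real.exp (z 2)) * Real.exp (-(z 2)))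
     else if b = 2 ∧ c = 2 then 1/2
     else if b = 3 ∧ c = 3 then -(1/2 : ℝ) * Real.exp (2 * z 0)
     else 0)
  else
    (if (b = 0 ∧ c = 3) ∨ (b = 3 ∧ c = 0) then 1
     else if (b = 2 ∧ c = 3) ∨ (b = 3 ∧ c = 2) then 1/2
     else 0)

set_option maxHeartbeats 2000000 in
lemma christoffel_eq (z : Pt 4) (a b c : Fin 4) :
    christoffel petrovG z a b c = Gam z a b c := by
  rw [christoffel, Ginv_eq]
  fin_cases a <;> fin_cases b <;> fin_cases c <;>
    (simp [Fin.sum_univ_four, GinvM, petrovG, Gam, pd_const, pd_m1, pd_m2, pd_m3]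
     try simp [Real.exp_add, Real.exp_neg]
     try field_simp
     try ring)

end PetrovAux2

section PetrovAux3

/-- Half of the mixed Riemann tensor `R^e_{b c d}` of the Petrov metric. -/
def Khalf (z : Pt 4) (e b c d : Fin 4) : ℝ :=
  if e = 0 then (if b = 0 ∧ c = 0 ∧ d = 2 then 1/2 else 0)
  else if e = 1 then
    (if b = 0 ∧ c = 0 ∧ d = 2 then z 2 * Real.exp (z 2) / 2 - z 1 * z 2 / 2
     else if b = 1 ∧ c = 0 ∧ d = 2 then -(1/2)
     else if b = 2 ∧ c = 0 ∧ d = 1 then -(1/2)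
     else if b = 2 ∧ c = 0 ∧ d = 2 then
       3 * Real.exp (z 2) / 4 + z 2 * Real.exp (z 2) / 4 + z 1 / 4
     else if b = 3 ∧ c = 0 ∧ d = 3 then
       -(3 * Real.exp (z 2) * Real.exp (2 * z 0) / 4) - z 2 * Real.exp (z 2) * Real.exp (2 * z 0) / 4
         - z 1 * Real.exp (2 * z 0) / 4
     else if b = 3 ∧ c = 2 ∧ d = 3 then -(Real.exp (z 2) * Real.exp (2 * z 0) / 2)
     else 0)
  else if e = 2 then
    (if b = 0 ∧ c = 0 ∧ d = 1 then Real.exp (-(z 2)) / 2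
     else if b = 0 ∧ c = 0 ∧ d = 2 then -(3/4) - z 2 / 4 - z 1 * Real.exp (-(z 2)) / 4
     else if b = 3 ∧ c = 0 ∧ d = 3 then -(Real.exp (2 * z 0) / 2)
     else 0)
  else
    (if b = 0 ∧ c = 0 ∧ d = 3 then 3/4 + z 2 / 4 + z 1 * Real.exp (-(z 2)) / 4
     else if b = 0 ∧ c = 2 ∧ d = 3 then 1/2
     else if b = 2 ∧ c = 0 ∧ d = 3 then 1/2
     else 0)

/-- The mixed Riemann tensor `R^e_{b c d}`, antisymmetrized in `c d`. -/
def Kval (z : Pt 4) (e b c d : Fin 4) : ℝ := Khalf z e b c d - Khalf z e b d c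

set_option maxHeartbeats 2000000 in
lemma K_eq0 (z : Pt 4) (b c d : Fin 4) :
    pd (fun y => Gam y 0 d b) c z - pd (fun y => Gam y 0 c b) d z
      + ∑ f : Fin 4, (Gam z 0 c f * Gam z f d b - Gam z 0 d f * Gam z f c b)
      = Kval z 0 b c d := by
  fin_cases b <;> fin_cases c <;> fin_cases d <;>
    (simp only [Fin.sum_univ_four, Gam, Kval, Khalf, Fin.isValue, Fin.reduceFinMk, Fin.reduceEq, reduceIte, and_self, and_true,
       true_and, and_false, false_and, or_self, or_false, false_or, true_or, or_true, if_true, if_false]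
     try simp only [pd_const, pd_G1, pd_G2, pd_G3, pd_G4, pd_G5, pd_G6, pd_G7, Fin.isValue, Fin.reduceFinMk, Fin.reduceEq,
       reduceIte, if_true, if_false]
     try simp [Real.exp_add, Real.exp_neg]
     try field_simp
     try ring)

end PetrovAux3

set_option maxHeartbeats 2000000 in
lemma K_eq1 (z : Pt 4) (b c d : Fin 4) :
    pd (fun y => Gam y 1 d b) c z - pd (fun y => Gam y 1 c b) d z
      + ∑ f : Fin 4, (Gam z 1 c f * Gam z f d b - Gam z 1 d f * Gam z f c b)
      = Kval z 1 b c d := by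
  fin_cases b <;> fin_cases c <;> fin_cases d <;>
    (simp only [Fin.sum_univ_four, Gam, Kval, Khalf, Fin.isValue, Fin.reduceFinMk, Fin.reduceEq,
       reduceIte, and_self, and_true, true_and, and_false, false_and, or_self, or_false,
       false_or, true_or, or_true, if_true, if_false]
     try simp only [pd_const, pd_G1, pd_G2, pd_G3, pd_G4, pd_G5, pd_G6, pd_G7, Fin.isValue,
       Fin.reduceFinMk, Fin.reduceEq, reduceIte, if_true, if_false]
     try simp [Real.exp_add, Real.exp_neg]
     try field_simp
     try ring)

set_option maxHeartbeats 2000000 in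
lemma K_eq2 (z : Pt 4) (b c d : Fin 4) :
    pd (fun y => Gam y 2 d b) c z - pd (fun y => Gam y 2 c b) d z
      + ∑ f : Fin 4, (Gam z 2 c f * Gam z f d b - Gam z 2 d f * Gam z f c b)
      = Kval z 2 b c d := by
  fin_cases b <;> fin_cases c <;> fin_cases d <;>
    (simp only [Fin.sum_univ_four, Gam, Kval, Khalf, Fin.isValue, Fin.reduceFinMk, Fin.reduceEq,
       reduceIte, and_self, and_true, true_and, and_false, false_and, or_self, or_false,
       false_or, true_or, or_true, if_true, if_false]
     try simp only [pd_const, pd_G1, pd_G2, pd_G3, pd_G4, pd_G5, pd_G6, pd_G7, Fin.isValue,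
       Fin.reduceFinMk, Fin.reduceEq, reduceIte, if_true, if_false]
     try simp [Real.exp_add, Real.exp_neg]
     try field_simp
     try ring)

set_option maxHeartbeats 2000000 in
lemma K_eq3 (z : Pt 4) (b c d : Fin 4) :
    pd (fun y => Gam y 3 d b) c z - pd (fun y => Gam y 3 c b) d z
      + ∑ f : Fin 4, (Gam z 3 c f * Gam z f d b - Gam z 3 d f * Gam z f c b)
      = Kval z 3 b c d := by
  fin_cases b <;> fin_cases c <;> fin_cases d <;>
    (simp only [Fin.sum_univ_four, Gam, Kval, Khalf, Fin.isValue, Fin.reduceFinMk, Fin.reduceEq,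
       reduceIte, and_self, and_true, true_and, and_false, false_and, or_self, or_false,
       false_or, true_or, or_true, if_true, if_false]
     try simp only [pd_const, pd_G1, pd_G2, pd_G3, pd_G4, pd_G5, pd_G6, pd_G7, Fin.isValue,
       Fin.reduceFinMk, Fin.reduceEq, reduceIte, if_true, if_false]
     try simp [Real.exp_add, Real.exp_neg]
     try field_simp
     try ring)

lemma K_eq (z : Pt 4) (e b c d : Fin 4) :
    pd (fun y => Gam y e d b) c z - pd (fun y => Gam y e c b) d z
      + ∑ f : Fin 4, (Gam z e c f * Gam z f d b - Gam z e d f * Gam z f c b)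
      = Kval z e b c d := by
  fin_cases e
  · exact K_eq0 z b c d
  · exact K_eq1 z b c d
  · exact K_eq2 z b c d
  · exact K_eq3 z b c d

lemma riemann_eq (z : Pt 4) (idx : Fin 4 → Fin 4) :
    riemann petrovG z idx
      = ∑ e : Fin 4, petrovG z (idx 0) e * Kval z e (idx 1) (idx 2) (idx 3) := by
  have hG : ∀ (a b c : Fin 4),
      (fun y => christoffel petrovG y a b c) = (fun y => Gam y a b c) :=
    fun a b c => funext fun y => christoffel_eq y a b c
  unfold riemann
  refine Finset.sum_congr rfl fun e _ => ?_
  congr 1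
  rw [hG, hG]
  simp only [christoffel_eq]
  exact K_eq z e (idx 1) (idx 2) (idx 3)

set_option maxHeartbeats 2000000 in
lemma ricci_zero (z : Pt 4) (b d : Fin 4) : ricci petrovG z b d = 0 := by
  unfold ricci
  simp only [Ginv_eq, riemann_eq, Matrix.cons_val_zero, Matrix.cons_val_one, Matrix.head_cons,
    Matrix.cons_val_two, Matrix.tail_cons, Matrix.cons_val_three]
  fin_cases b <;> fin_cases d <;>
    (simp [Fin.sum_univ_four, GinvM, petrovG, Kval, Khalf]
     try simp [Real.exp_add, Real.exp_neg]
     try field_simp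
     try ring)

lemma ricciScalar_zero (z : Pt 4) : ricciScalar petrovG z = 0 := by
  simp [ricciScalar, ricci_zero]

lemma weyl_eq_riemann (z : Pt 4) (idx : Fin 4 → Fin 4) :
    weyl petrovG z idx = riemann petrovG z idx := by
  simp [weyl, ricci_zero, ricciScalar_zero]

/-- Coordinate boost weights with respect to `ℓ = ∂_r`. -/
def Wt : Fin 4 → ℤ := ![-1, 1, 0, 0]

set_option maxHeartbeats 2000000 in
lemma riem_zero (z : Pt 4) (idx : Fin 4 → Fin 4)
    (h : 0 ≤ Wt (idx 0) + Wt (idx 1) + Wt (idx 2) + Wt (idx 3)) :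
    riemann petrovG z idx = 0 := by
  rw [riemann_eq]
  revert h
  generalize idx 0 = a; generalize idx 1 = b; generalize idx 2 = c; generalize idx 3 = d
  intro h
  fin_cases a <;> fin_cases b <;> fin_cases c <;> fin_cases d <;>
    first
      | exact absurd h (by decide)
      | simp [Fin.sum_univ_four, petrovG, Kval, Khalf]

lemma bw_eq (a : Fin 4 → Fin 4) : bw a = ∑ m : Fin 4, -Wt (a m) := by
  have hw : ∀ v : Fin 4, -Wt v
      = (if (v : ℕ) = 0 then (1:ℤ) else 0) - (if (v : ℕ) = 1 then 1 else 0) := by decide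
  simp only [hw]
  rw [bw, Finset.sum_sub_distrib]
  congr 1 <;>
    · rw [Finset.card_filter]
      push_cast
      exact Finset.sum_congr rfl fun m _ => by split_ifs <;> simp

lemma gdot_ellR (z : Pt 4) (Y : Fin 4 → ℝ) : gdot petrovG z (ellR z) Y = Y 0 := by
  simp [gdot, ellR, petrovG, Fin.sum_univ_four]

lemma slot_bound (e : Fin 4 → Fin 4 → ℝ)
    (h0 : ∀ j : Fin 4, e 0 j = (if j = 1 then 1 else 0))
    (h2 : ∀ i : Fin 4, 2 ≤ (i : ℕ) → e i 0 = 0)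
    (v j : Fin 4) (hne : e v j ≠ 0) : -Wt v ≤ Wt j := by
  rcases eq_or_ne v 0 with rfl | hv0
  · rw [h0] at hne
    rcases eq_or_ne j 1 with rfl | hj
    · decide
    · simp [hj] at hne
  · rcases eq_or_ne v 1 with rfl | hv1
    · fin_cases j <;> decide
    · have h2le : 2 ≤ (v : ℕ) := by revert hv0 hv1; fin_cases v <;> decide
      rcases eq_or_ne j 0 with rfl | hj
      · exact absurd (h2 v h2le) hne
      · clear hne h0 h2
        revert h2le hj
        fin_cases v <;> fin_cases j <;> decide

lemma boost_le : BoostOrderLE petrovG ellR (weyl petrovG) (-1) := by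
  intro x fr h0 a ha
  simp only [frameComp]
  apply Finset.sum_eq_zero
  intro idx _
  rcases eq_or_ne (∏ m : Fin 4, fr.e (a m) (idx m)) 0 with hp | hp
  · rw [hp, mul_zero]
  · have hfac : ∀ m : Fin 4, fr.e (a m) (idx m) ≠ 0 := by
      intro m hm
      exact hp (Finset.prod_eq_zero (Finset.mem_univ m) hm)
    have he0 : ∀ j : Fin 4, fr.e 0 j = (if j = 1 then 1 else 0) := by
      intro j; rw [h0]; rfl
    have he2 : ∀ i : Fin 4, 2 ≤ (i : ℕ) → fr.e i 0 = 0 := by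
      intro i hi
      have hg := fr.h0i i hi
      rw [h0, gdot_ellR] at hg
      exact hg
    have hslot : ∀ m : Fin 4, -Wt (a m) ≤ Wt (idx m) :=
      fun m => slot_bound fr.e he0 he2 (a m) (idx m) (hfac m)
    have hb : bw a ≤ ∑ m : Fin 4, Wt (idx m) := by
      rw [bw_eq]
      exact Finset.sum_le_sum fun m _ => hslot m
    rw [Fin.sum_univ_four] at hb
    have hge : 0 ≤ Wt (idx 0) + Wt (idx 1) + Wt (idx 2) + Wt (idx 3) := by omega
    rw [weyl_eq_riemann, riem_zero x idx hge, zero_mul]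

/-- The point `0` and the coordinate null frame there. -/
def z0 : Pt 4 := fun _ => 0

def Efr : Fin 4 → Fin 4 → ℝ :=
  ![![0,1,0,0], ![1,0,0,0], ![0,0,1,0], ![0,0,0,1]]

lemma frame0 : ∃ fr : NullFrameAt petrovG z0, fr.e = Efr := by
  refine ⟨⟨Efr, ?_, ?_, ?_, ?_, ?_, ?_⟩, rfl⟩
  · simp [gdot, petrovG, Efr, z0, Fin.sum_univ_four]
  · simp [gdot, petrovG, Efr, z0, Fin.sum_univ_four]
  · simp [gdot, petrovG, Efr, z0, Fin.sum_univ_four]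
  · intro i hi
    fin_cases i <;>
      first
        | exact absurd hi (by decide)
        | (simp [gdot, petrovG, Efr, z0, Fin.sum_univ_four, Matrix.vecHead, Matrix.vecTail]; try norm_num)
  · intro i hi
    fin_cases i <;>
      first
        | exact absurd hi (by decide)
        | (simp [gdot, petrovG, Efr, z0, Fin.sum_univ_four, Matrix.vecHead, Matrix.vecTail]; try norm_num)
  · intro i j hi hj
    fin_cases i <;> fin_cases j <;>
      first
        | exact absurd hi (by decide)
        | exact absurd hj (by decide)
        | (simp [gdot, petrovG, Efr, z0, Fin.sum_univ_four, Matrix.vecHead, Matrix.vecTail]; try norm_num)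

lemma Ezero (m j : Fin 4) (hj : j ≠ (![0,1,0,2] : Fin 4 → Fin 4) m) :
    Efr ((![1,0,1,2] : Fin 4 → Fin 4) m) j = 0 := by
  fin_cases m <;> fin_cases j <;> simp_all [Efr, Matrix.vecHead, Matrix.vecTail]

lemma frameComp_val :
    frameComp (weyl petrovG) Efr z0 ![1,0,1,2] = -(1/2) := by
  have hpick : frameComp (weyl petrovG) Efr z0 ![1,0,1,2]
      = weyl petrovG z0 ![0,1,0,2]
        * ∏ m : Fin 4, Efr ((![1,0,1,2] : Fin 4 → Fin 4) m) ((![0,1,0,2] : Fin 4 → Fin 4) m) := by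
    simp only [frameComp]
    rw [Finset.sum_eq_single (![0,1,0,2] : Fin 4 → Fin 4)]
    · intro idx _ hne
      obtain ⟨m, hm⟩ := Function.ne_iff.mp hne
      rw [Finset.prod_eq_zero (Finset.mem_univ m) (Ezero m (idx m) hm), mul_zero]
    · intro h; exact absurd (Finset.mem_univ _) h
  rw [hpick, weyl_eq_riemann, riemann_eq]
  simp [Fin.sum_univ_four, Fin.prod_univ_four, petrovG, Kval, Khalf, Efr, z0]
  try norm_num

theorem petrov_aux_main :
    (∀ (x : Pt 4) (a b : Fin 4), ricci petrovG x a b = 0) ∧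
    BoostOrderLE petrovG ellR (weyl petrovG) (-1) ∧
    (∃ (x : Pt 4) (fr : NullFrameAt petrovG x), fr.e 0 = ellR x ∧
      ∃ a : Fin 4 → Fin 4, bw a = -1 ∧ frameComp (weyl petrovG) fr.e x a ≠ 0) := by
  obtain ⟨fr, hfr⟩ := frame0
  refine ⟨fun x a b => ricci_zero x a b, boost_le, z0, fr, ?_, ![1,0,1,2], by decide, ?_⟩
  · rw [hfr]
    funext j
    fin_cases j <;> simp [Efr, ellR]
  · rw [hfr, frameComp_val]
    norm_num
/-- Petrov's metric
`ds² = 2 du (dr + ½(xr − x eˣ) du) + eˣ(dx² + e^{2u} dy²)` is Ricci-flat and of Weyl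
type III with multiple null direction `ℓ = ∂_r`. -/
theorem petrov_vacuum_typeIII :
    (∀ (x : Pt 4) (a b : Fin 4), ricci petrovG x a b = 0) ∧
    BoostOrderLE petrovG ellR (weyl petrovG) (-1) ∧
    (∃ (x : Pt 4) (fr : NullFrameAt petrovG x), fr.e 0 = ellR x ∧
      ∃ a : Fin 4 → Fin 4, bw a = -1 ∧ frameComp (weyl petrovG) fr.e x a ≠ 0) := by
  exact petrov_aux_main

end VSI
end
end
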